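/- arXiv:2505.19340 — 12 statements merged into one kernel-verified Lean document; each statement's English description precedes it below -/
import Mathlib

section
/- If G is a graph with dual mutual-visibility number μ_d(G)=1 and {x} is a maximum dual mutual-visibility set in G, then the total mutual-visibility number of G−x equals 0. -/
open SimpleGraph

/-- `u` and `v` are `X`-visible in `G`: there is a shortest `u,v`-walk whose
vertices meet `X` only possibly in `u` and `v`. -/
def IsMVisible {V : Type*} (G : SimpleGraph V) (X : Set V) (u v : V) : Prop :=
  ∃ P : G.Walk u v, P.length = G.dist u v ∧
    ∀ w ∈ P.support, w ∈ X → w = u ∨ w = v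

/-- mutual-visibility set -/
def IsMVSet {V : Type*} (G : SimpleGraph V) (X : Set V) : Prop :=
  ∀ u ∈ X, ∀ v ∈ X, IsMVisible G X u v

/-- outer mutual-visibility set -/
def IsOuterMVSet {V : Type*} (G : SimpleGraph V) (X : Set V) : Prop :=
  ∀ u ∈ X, ∀ v : V, IsMVisible G X u v

/-- dual mutual-visibility set -/
def IsDualMVSet {V : Type*} (G : SimpleGraph V) (X : Set V) : Prop :=
  (∀ u ∈ X, ∀ v ∈ X, IsMVisible G X u v) ∧
  (∀ u ∉ X, ∀ v ∉ X, IsMVisible G X u v)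

/-- total mutual-visibility set -/
def IsTotalMVSet {V : Type*} (G : SimpleGraph V) (X : Set V) : Prop :=
  ∀ u v : V, IsMVisible G X u v

/-- the mutual-visibility number μ(G) -/
noncomputable def mu {V : Type*} (G : SimpleGraph V) : ℕ :=
  sSup {n | ∃ X : Set V, IsMVSet G X ∧ X.ncard = n}

/-- the outer mutual-visibility number μₒ(G) -/
noncomputable def muO {V : Type*} (G : SimpleGraph V) : ℕ :=
  sSup {n | ∃ X : Set V, IsOuterMVSet G X ∧ X.ncard = n}

/-- the dual mutual-visibility number μ_d(G) -/
noncomputable def muD {V : Type*} (G : SimpleGraph V) : ℕ :=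
  sSup {n | ∃ X : Set V, IsDualMVSet G X ∧ X.ncard = n}

/-- the total mutual-visibility number μ_t(G) -/
noncomputable def muT {V : Type*} (G : SimpleGraph V) : ℕ :=
  sSup {n | ∃ X : Set V, IsTotalMVSet G X ∧ X.ncard = n}

/-!
If `y` belonged to a nonempty total mutual-visibility set `Y` of `G - x`, then `{x, y}` would be
a dual mutual-visibility set of `G`, contradicting `μ_d(G) = 1`. Indeed, since `{x}` is a dual
mutual-visibility set, two vertices `u, v ≠ x` are joined by a shortest path of `G` avoiding `x`;
so distances between them in `G` and in `G - x` agree, and a shortest `u,v`-path of `G - x`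
that avoids `Y` internally is a shortest path of `G` avoiding both `x` and `y`.
-/

section

variable {V : Type*} {G : SimpleGraph V}

theorem IsMVisible.mono {X Y : Set V} {u v : V} (hXY : X ⊆ Y) (h : IsMVisible G Y u v) :
    IsMVisible G X u v := by
  obtain ⟨p, hp, hpY⟩ := h
  exact ⟨p, hp, fun w hw hwX => hpY w hw (hXY hwX)⟩

theorem isMVSet_pair (hG : G.Preconnected) (a b : V) : IsMVSet G {a, b} := by
  intro u hu v hv
  obtain rfl | huv := eq_or_ne u v
  · exact ⟨Walk.nil, by simp, by simp⟩
  obtain ⟨p, hp⟩ := (hG u v).exists_walk_length_eq_dist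
  refine ⟨p, hp, fun w _ hw => ?_⟩
  simp only [Set.mem_insert_iff, Set.mem_singleton_iff] at hu hv hw
  rcases hu with rfl | rfl <;> rcases hv with rfl | rfl <;> rcases hw with rfl | rfl <;> simp_all

/-- A shortest path of `G[s]` is a shortest path of `G` as soon as some shortest path of `G`
stays inside `s`. -/
theorem IsMVisible.of_induce {s : Set V} {Y : Set s} {u v : V} (hu : u ∈ s) (hv : v ∈ s)
    (hs : IsMVisible G sᶜ u v) (hY : IsMVisible (G.induce s) Y ⟨u, hu⟩ ⟨v, hv⟩) :
    IsMVisible G (sᶜ ∪ Subtype.val '' Y) u v := by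
  obtain ⟨p, hp, hps⟩ := hs
  have hsupp : ∀ w ∈ p.support, w ∈ s := fun w hw => by_contra fun hws =>
    (hps w hw hws).elim (fun h => hws (h ▸ hu)) (fun h => hws (h ▸ hv))
  have hdist : (G.induce s).dist ⟨u, hu⟩ ⟨v, hv⟩ ≤ G.dist u v :=
    calc (G.induce s).dist ⟨u, hu⟩ ⟨v, hv⟩ ≤ (p.induce s hsupp).length := dist_le _
      _ = p.length := by rw [← Walk.length_map (Embedding.induce s).toHom, Walk.map_induce]; rfl
      _ = G.dist u v := hp
  obtain ⟨q, hq, hqY⟩ := hY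
  let q' : G.Walk u v := q.map (Embedding.induce s).toHom
  have hq' : q'.length = q.length := Walk.length_map _ _
  refine ⟨q', le_antisymm (hq' ▸ hq ▸ hdist) (dist_le q'), ?_⟩
  have hsupp' : q'.support = q.support.map Subtype.val := Walk.support_map _ _
  rintro w hw (hws | ⟨z, hzY, rfl⟩) <;> rw [hsupp', List.mem_map] at hw
  · obtain ⟨z, -, rfl⟩ := hw
    exact absurd z.2 hws
  · obtain ⟨z', hz', hz'z⟩ := hw
    obtain rfl : z' = z := Subtype.ext hz'z
    exact (hqY z' hz' hzY).imp (congrArg Subtype.val) (congrArg Subtype.val)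

theorem isDualMVSet_pair_of_isTotalMVSet_induce (hG : G.Connected) {x : V}
    (hx : IsDualMVSet G {x}) {Y : Set {v | v ≠ x}}
    (hY : IsTotalMVSet (G.induce {v | v ≠ x}) Y) {y : {v | v ≠ x}} (hy : y ∈ Y) :
    IsDualMVSet G {x, y.val} := by
  refine ⟨isMVSet_pair hG.preconnected x y, fun u hu v hv => ?_⟩
  simp only [Set.mem_insert_iff, Set.mem_singleton_iff, not_or] at hu hv
  have hcompl : {v : V | v ≠ x}ᶜ = {x} := by ext; simp
  have hvis := IsMVisible.of_induce hu.1 hv.1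
    (hcompl ▸ hx.2 u (by simpa using hu.1) v (by simpa using hv.1)) (hY _ _)
  refine hvis.mono ?_
  rintro w (rfl | rfl)
  · exact Or.inl (hcompl ▸ rfl)
  · exact Or.inr ⟨y, hy, rfl⟩

/-- `muD G ≠ 0` makes the defining set bounded: in `ℕ`, `sSup` of an unbounded set is `0`. -/
theorem ncard_le_muD (h : muD G ≠ 0) {X : Set V} (hX : IsDualMVSet G X) : X.ncard ≤ muD G :=
  le_csSup (by_contra fun hb => h (Nat.sSup_of_not_bddAbove hb)) ⟨X, hX, rfl⟩

end

theorem stmt_0_general {V : Type*} (G : SimpleGraph V) (hG : G.Connected) (x : V)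
    (hmuD : muD G = 1) (hx : IsDualMVSet G {x}) :
    muT (G.induce {v | v ≠ x}) = 0 := by
  refine Nat.eq_zero_of_le_zero (csSup_le' ?_)
  rintro _ ⟨Y, hY, rfl⟩
  by_contra hpos
  obtain ⟨y, hy⟩ := Set.nonempty_of_ncard_ne_zero (by omega : Y.ncard ≠ 0)
  have h2 := ncard_le_muD (by omega) (isDualMVSet_pair_of_isTotalMVSet_induce hG hx hY hy)
  rw [Set.ncard_pair (Ne.symm y.2)] at h2
  omega

theorem stmt_0 {V : Type*} [Fintype V] (G : SimpleGraph V) (hG : G.Connected) (x : V)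
    (hconn : (G.induce {v | v ≠ x}).Connected)
    (hmuD : muD G = 1) (hx : IsDualMVSet G {x}) :
    muT (G.induce {v | v ≠ x}) = 0 :=
  stmt_0_general G hG x hmuD hx
end

section
/- If a connected graph G has a vertex partition V(G) = A ∪ B such that G[A] is a complete graph on k vertices and G[B] is an isometric subgraph of G, then the dual mutual-visibility number of G is at least k. -/
open SimpleGraph

/-! The clique `A` itself is a dual mutual-visibility set: two vertices of `A` are adjacent, and
two vertices of `B = Aᶜ` are joined by a shortest path of `G[B]`, which is a shortest path of `G`
by isometry and avoids `A`. -/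

namespace SimpleGraph

variable {V : Type*} {G : SimpleGraph V}

lemma isMVisible_self (X : Set V) (u : V) : IsMVisible G X u u :=
  ⟨Walk.nil, by simp, by simp⟩

lemma IsClique.isMVSet {A : Set V} (hA : G.IsClique A) : IsMVSet G A := by
  intro u hu v hv
  obtain rfl | huv := eq_or_ne u v
  · exact isMVisible_self A u
  · have hadj : G.Adj u v := hA hu hv huv
    refine ⟨hadj.toWalk, by simp [dist_eq_one_iff_adj.mpr hadj], fun w hw _ => ?_⟩
    simpa using hw

lemma reachable_induce_of_dist_eq {Y : Set V} {u v : Y} (huv : G.Reachable u v)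
    (hdist : (G.induce Y).dist u v = G.dist u v) : (G.induce Y).Reachable u v := by
  by_contra h
  have hzero : G.dist u v = 0 := by
    rw [← hdist]
    exact dist_eq_zero_iff_eq_or_not_reachable.mpr (Or.inr h)
  exact h (Subtype.ext (huv.dist_eq_zero_iff.mp hzero) ▸ Reachable.refl _)

lemma isMVisible_of_induce_dist_eq {X Y : Set V} (hXY : Disjoint X Y) {u v : Y}
    (huv : G.Reachable u v) (hdist : (G.induce Y).dist u v = G.dist u v) :
    IsMVisible G X u v := by
  obtain ⟨P, hP⟩ := (reachable_induce_of_dist_eq huv hdist).exists_walk_length_eq_dist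
  refine ⟨P.map (Embedding.induce Y).toHom, (Walk.length_map _ _).trans (hP.trans hdist),
    fun w hw hwX => ?_⟩
  obtain ⟨x, -, rfl⟩ := List.mem_map.mp ((Walk.support_map _ P) ▸ hw)
  exact absurd x.2 (hXY.notMem_of_mem_left hwX)

lemma isDualMVSet_of_isClique_of_compl_isometric (hG : G.Connected) {A : Set V}
    (hA : G.IsClique A) (hiso : ∀ u v : ↥Aᶜ, (G.induce Aᶜ).dist u v = G.dist u v) :
    IsDualMVSet G A :=
  ⟨hA.isMVSet, fun u hu v hv =>
    isMVisible_of_induce_dist_eq (Y := Aᶜ) disjoint_compl_right (u := ⟨u, hu⟩) (v := ⟨v, hv⟩)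
      (hG u v) (hiso _ _)⟩

lemma IsDualMVSet.ncard_le_muD [Finite V] {X : Set V} (hX : IsDualMVSet G X) :
    X.ncard ≤ muD G :=
  le_csSup ⟨Nat.card V, fun _ ⟨Y, _, hY⟩ => hY ▸ Y.ncard_le_card⟩ ⟨X, hX, rfl⟩

end SimpleGraph

theorem stmt_1 {V : Type*} [Fintype V] (G : SimpleGraph V) (hG : G.Connected)
    (A B : Set V) (k : ℕ)
    (hUnion : A ∪ B = Set.univ) (hdisj : Disjoint A B)
    (hA : A.ncard = k)
    (hcomplete : ∀ u ∈ A, ∀ v ∈ A, u ≠ v → G.Adj u v)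
    (hiso : ∀ u v : B, (G.induce B).dist u v = G.dist u v) :
    k ≤ muD G := by
  obtain rfl : B = Aᶜ := (IsCompl.mk hdisj (codisjoint_iff.mpr hUnion)).symm.eq_compl
  exact hA ▸ (isDualMVSet_of_isClique_of_compl_isometric hG
    (fun u hu v hv huv => hcomplete u hu v hv huv) hiso).ncard_le_muD
end

section
/- Let G be a connected graph, Z a mutual-visibility set in G, and x,y ∈ V(G). Define Z_G(x,y) = {u ∈ Z : d_G(u,x) ≤ d_G(u,y)}. If u, u' ∈ Z_G(x,y), then no shortest u,u'-path in G contains both x and y. -/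
open SimpleGraph

lemma split_shortest {V : Type*} [DecidableEq V] {G : SimpleGraph V} (hG : G.Connected)
    {a b w : V} (P : G.Walk a b) (hP : P.length = G.dist a b)
    (hw : w ∈ P.support) :
    (P.takeUntil w hw).length = G.dist a w ∧
    (P.dropUntil w hw).length = G.dist w b := by
  have h1 : G.dist a w ≤ (P.takeUntil w hw).length := SimpleGraph.dist_le _
  have h2 : G.dist w b ≤ (P.dropUntil w hw).length := SimpleGraph.dist_le _
  have h3 : (P.takeUntil w hw).length + (P.dropUntil w hw).length = P.length := by
    rw [← SimpleGraph.Walk.length_append, SimpleGraph.Walk.take_spec]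
  have h4 : G.dist a b ≤ G.dist a w + G.dist w b := hG.dist_triangle
  omega

theorem stmt_2 {V : Type*} (G : SimpleGraph V) (hG : G.Connected)
    (Z : Set V) (hZ : IsMVSet G Z) (x y : V) (hxy : x ≠ y)
    (u u' : V) (hu : u ∈ Z) (hu' : u' ∈ Z)
    (hux : G.dist u x ≤ G.dist u y) (hu'x : G.dist u' x ≤ G.dist u' y) :
    ∀ P : G.Walk u u', P.length = G.dist u u' →
      ¬ (x ∈ P.support ∧ y ∈ P.support) := by
  classical
  rintro P hP ⟨hx, hy⟩
  have hdxy : 0 < G.dist x y := hG.pos_dist_of_ne hxy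
  obtain ⟨hQ, hR⟩ := split_shortest hG P hP hx
  have hy' : y ∈ (P.takeUntil x hx).support ∨ y ∈ (P.dropUntil x hx).support := by
    have := SimpleGraph.Walk.take_spec P hx
    rw [← this, SimpleGraph.Walk.mem_support_append_iff] at hy
    exact hy
  cases hy' with
  | inl h =>
    obtain ⟨h1, h2⟩ := split_shortest hG (P.takeUntil x hx) hQ h
    have hsum : ((P.takeUntil x hx).takeUntil y h).length
        + ((P.takeUntil x hx).dropUntil y h).length = (P.takeUntil x hx).length := by
      rw [← SimpleGraph.Walk.length_append, SimpleGraph.Walk.take_spec]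
    have : G.dist u x = G.dist u y + G.dist y x := by omega
    have hyx : 0 < G.dist y x := by rwa [SimpleGraph.dist_comm] at hdxy
    omega
  | inr h =>
    obtain ⟨h1, h2⟩ := split_shortest hG (P.dropUntil x hx) hR h
    have hsum : ((P.dropUntil x hx).takeUntil y h).length
        + ((P.dropUntil x hx).dropUntil y h).length = (P.dropUntil x hx).length := by
      rw [← SimpleGraph.Walk.length_append, SimpleGraph.Walk.take_spec]
    have : G.dist x u' = G.dist x y + G.dist y u' := by omega
    have e1 : G.dist u' x = G.dist x u' := SimpleGraph.dist_comm ..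
    have e2 : G.dist u' y = G.dist y u' := SimpleGraph.dist_comm ..
    omega
end

section
/- Let G be a connected graph, Z ⊆ V(G), and let e = xy be an edge of G such that G−e is connected. Then Z_G(x,y) = Z_{G−e}(x,y), where Z_H(x,y) = {u ∈ Z : d_H(u,x) ≤ d_H(u,y)}. -/
open SimpleGraph

lemma dist_del_aux {V : Type*} {G : SimpleGraph V} {x y : V} (hxy : G.Adj x y)
    (hconn : (G.deleteEdges {s(x, y)}).Connected) (u : V) :
    G.dist u x = min ((G.deleteEdges {s(x, y)}).dist u x)
      ((G.deleteEdges {s(x, y)}).dist u y + 1) := by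
  classical
  set G' := G.deleteEdges {s(x, y)} with hG'
  have hle : G' ≤ G := G.deleteEdges_le _
  have hG : G.Connected := hconn.mono hle
  apply le_antisymm
  · apply le_min
    · obtain ⟨p, hp, hlen⟩ := hconn.exists_path_of_dist u x
      calc G.dist u x ≤ (p.mapLe hle).length := G.dist_le _
        _ = p.length := by simp [Walk.mapLe]
        _ = _ := hlen
    · obtain ⟨q, hq, hqlen⟩ := hconn.exists_path_of_dist u y
      calc G.dist u x ≤ ((q.mapLe hle).concat hxy.symm).length := G.dist_le _
        _ = (q.mapLe hle).length + 1 := Walk.length_concat _ _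
        _ = G'.dist u y + 1 := by simp [Walk.mapLe, hqlen]
  · obtain ⟨p, hp, hlen⟩ := hG.exists_path_of_dist u x
    by_cases he : s(x, y) ∈ p.edges
    · have hy : y ∈ p.support := p.snd_mem_support_of_mem_edges he
      set q := p.takeUntil y hy with hqdef
      set r := p.dropUntil y hy with hrdef
      have hspec : q.append r = p := p.take_spec hy
      have hnodup : p.support.Nodup := hp.support_nodup
      have hrlen : 1 ≤ r.length := by
        cases r with
        | nil => exact absurd rfl hxy.ne'
        | cons h q' => simp
      have hxq : s(x, y) ∉ q.edges := by
        intro hq'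
        have hx1 : x ∈ q.support := q.fst_mem_support_of_mem_edges hq'
        have hx2 : x ∈ r.support.tail := by
          cases r with
          | nil => exact absurd rfl hxy.ne'
          | cons h r' => simpa using r'.end_mem_support
        rw [← hspec, Walk.support_append] at hnodup
        exact (List.disjoint_of_nodup_append hnodup) hx1 hx2
      have hd : G'.dist u y ≤ q.length := by
        have := G'.dist_le (q.toDeleteEdges {s(x, y)} (fun e' he' hs => hxq (by
          rw [Set.mem_singleton_iff] at hs; rwa [hs] at he')))
        rwa [Walk.length_transfer] at this
      have hsum : q.length + r.length = p.length := by
        rw [← hspec, Walk.length_append]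
      omega
    · have hd : G'.dist u x ≤ p.length := by
        have := G'.dist_le (p.toDeleteEdges {s(x, y)} (fun e' he' hs => he (by
          rw [Set.mem_singleton_iff] at hs; rwa [hs] at he')))
        rwa [Walk.length_transfer] at this
      omega

theorem stmt_3 {V : Type*} (G : SimpleGraph V) (hG : G.Connected) (Z : Set V)
    (x y : V) (hxy : G.Adj x y)
    (hconn : (G.deleteEdges {s(x, y)}).Connected) :
    {u ∈ Z | G.dist u x ≤ G.dist u y} =
      {u ∈ Z | (G.deleteEdges {s(x, y)}).dist u x ≤ (G.deleteEdges {s(x, y)}).dist u y} := by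
  classical
  have h1 := dist_del_aux hxy hconn
  have h2 : ∀ u : V, G.dist u y = min ((G.deleteEdges {s(x, y)}).dist u y)
      ((G.deleteEdges {s(x, y)}).dist u x + 1) := by
    intro u
    have hs : s(y, x) = s(x, y) := Sym2.eq_swap
    have := dist_del_aux hxy.symm (by rwa [hs]) u
    rwa [hs] at this
  ext u
  simp only [Set.mem_setOf_eq]
  rw [h1 u, h2 u]
  constructor <;> rintro ⟨hz, h⟩ <;> exact ⟨hz, by omega⟩
end

section
/- If G is a connected graph, e ∈ E(G), and G−e is connected, then (1/2)·μ(G) ≤ μ(G−e) ≤ 2·μ(G), where μ denotes the mutual-visibility number. -/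
open SimpleGraph

section Aux

variable {V : Type*}

private lemma split_dist [DecidableEq V] (G : SimpleGraph V) (hG : G.Connected) {u v w : V}
    (p : G.Walk u v) (hp : p.length = G.dist u v) (hw : w ∈ p.support) :
    (p.takeUntil w hw).length = G.dist u w ∧ (p.dropUntil w hw).length = G.dist w v ∧
      G.dist u w + G.dist w v = G.dist u v := by
  have h1 := G.dist_le (p.takeUntil w hw)
  have h2 := G.dist_le (p.dropUntil w hw)
  have h3 := hG.dist_triangle (u := u) (v := w) (w := v)
  have h4 : (p.takeUntil w hw).length + (p.dropUntil w hw).length = p.length := by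
    rw [← SimpleGraph.Walk.length_append, p.take_spec hw]
  omega

private lemma no_edge [DecidableEq V] {G : SimpleGraph V} (hG : G.Connected) {x y u v : V} (hxy : G.Adj x y)
    (hu : G.dist u x ≤ G.dist u y) (hv : G.dist v x ≤ G.dist v y)
    {p : G.Walk u v} (hp : p.length = G.dist u v) : s(x, y) ∉ p.edges := by
  intro he
  have hxs : x ∈ p.support := p.fst_mem_support_of_mem_edges he
  have hys : y ∈ p.support := p.snd_mem_support_of_mem_edges he
  obtain ⟨hq, hr, hsum⟩ := split_dist G hG p hp hxs
  have hd1 : G.dist x y = 1 := dist_eq_one_iff_adj.mpr hxy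
  have hysplit : y ∈ (p.takeUntil x hxs).support ∨ y ∈ (p.dropUntil x hxs).support := by
    rw [← SimpleGraph.Walk.mem_support_append_iff, p.take_spec hxs]; exact hys
  cases hysplit with
  | inl h =>
    obtain ⟨_, _, hadd⟩ := split_dist G hG _ hq h
    have : G.dist y x = 1 := by rwa [G.dist_comm]
    omega
  | inr h =>
    obtain ⟨_, _, hadd⟩ := split_dist G hG _ hr h
    have hcv : G.dist x v = G.dist v x := G.dist_comm
    have hcv' : G.dist y v = G.dist v y := G.dist_comm
    omega

private lemma walk_min {G : SimpleGraph V} {x y : V}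
    (hconn : (G.deleteEdges {s(x, y)}).Connected)
    {a b : V} (p : G.Walk a b) :
    min ((G.deleteEdges {s(x, y)}).dist a b)
      (min ((G.deleteEdges {s(x, y)}).dist a x + 1 + (G.deleteEdges {s(x, y)}).dist y b)
           ((G.deleteEdges {s(x, y)}).dist a y + 1 + (G.deleteEdges {s(x, y)}).dist x b))
      ≤ p.length := by
  set G' := G.deleteEdges {s(x, y)} with hG'
  induction p with
  | nil =>
    have : G'.dist a a = 0 := SimpleGraph.dist_self (G := G')
    simp [this]
  | @cons u c w h q ih =>
    rw [SimpleGraph.Walk.length_cons]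
    by_cases hc : s(u, c) = s(x, y)
    · rw [Sym2.eq_iff] at hc
      have hxx : G'.dist x x = 0 := SimpleGraph.dist_self (G := G')
      have hyy : G'.dist y y = 0 := SimpleGraph.dist_self (G := G')
      rcases hc with ⟨hux, hcy⟩ | ⟨huy, hcx⟩
      · subst hux; subst hcy; omega
      · subst huy; subst hcx; omega
    · have h' : G'.Adj u c := by
        rw [hG', deleteEdges_adj]
        exact ⟨h, by simpa using hc⟩
      have hle : G'.dist u c ≤ 1 := by
        have := G'.dist_le h'.toWalk
        simpa [SimpleGraph.Adj.toWalk] using this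
      have t1 : G'.dist u w ≤ G'.dist u c + G'.dist c w := hconn.dist_triangle
      have t2 : G'.dist u x ≤ G'.dist u c + G'.dist c x := hconn.dist_triangle
      have t3 : G'.dist u y ≤ G'.dist u c + G'.dist c y := hconn.dist_triangle
      omega

private lemma dist_eq_del {G : SimpleGraph V} (hG : G.Connected) {x y : V}
    (hconn : (G.deleteEdges {s(x, y)}).Connected) {u v : V}
    (hu : (G.deleteEdges {s(x, y)}).dist u x ≤ (G.deleteEdges {s(x, y)}).dist u y)
    (hv : (G.deleteEdges {s(x, y)}).dist v x ≤ (G.deleteEdges {s(x, y)}).dist v y) :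
    G.dist u v = (G.deleteEdges {s(x, y)}).dist u v := by
  set G' := G.deleteEdges {s(x, y)} with hG'
  apply le_antisymm
  · obtain ⟨p', hp'⟩ := (hconn u v).exists_walk_length_eq_dist
    have hsub : ∀ e ∈ p'.edges, e ∈ G.edgeSet := fun e he => by
      have := p'.edges_subset_edgeSet he
      rw [hG', edgeSet_deleteEdges] at this
      exact this.1
    have := G.dist_le (p'.transfer G hsub)
    rwa [SimpleGraph.Walk.length_transfer, hp'] at this
  · obtain ⟨p, hp⟩ := (hG u v).exists_walk_length_eq_dist
    have hmin := walk_min (G := G) (x := x) (y := y) hconn p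
    rw [hp, ← hG'] at hmin
    have t1 : G'.dist u v ≤ G'.dist u x + G'.dist x v := hconn.dist_triangle
    have c1 : G'.dist x v = G'.dist v x := G'.dist_comm
    have c2 : G'.dist y v = G'.dist v y := G'.dist_comm
    omega

private lemma mv_le_mu {G : SimpleGraph V} [Fintype V] {X : Set V} (hX : IsMVSet G X) :
    X.ncard ≤ mu G := by
  apply le_csSup
  · refine ⟨Fintype.card V, fun n hn => ?_⟩
    obtain ⟨Y, _, rfl⟩ := hn
    calc Y.ncard ≤ (Set.univ : Set V).ncard :=
          Set.ncard_le_ncard (Set.subset_univ Y) Set.finite_univ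
      _ = Fintype.card V := by rw [Set.ncard_univ, Nat.card_eq_fintype_card]
  · exact ⟨X, hX, rfl⟩

private lemma exists_mu_set (G : SimpleGraph V) [Fintype V] :
    ∃ X : Set V, IsMVSet G X ∧ X.ncard = mu G := by
  have h1 : ({n | ∃ X : Set V, IsMVSet G X ∧ X.ncard = n} : Set ℕ).Nonempty :=
    ⟨0, ∅, fun u hu => absurd hu (Set.notMem_empty u), by simp⟩
  have h2 : BddAbove {n | ∃ X : Set V, IsMVSet G X ∧ X.ncard = n} := by
    refine ⟨Fintype.card V, fun n hn => ?_⟩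
    obtain ⟨Y, _, rfl⟩ := hn
    calc Y.ncard ≤ (Set.univ : Set V).ncard :=
          Set.ncard_le_ncard (Set.subset_univ Y) Set.finite_univ
      _ = Fintype.card V := by rw [Set.ncard_univ, Nat.card_eq_fintype_card]
  exact Nat.sSup_mem h1 h2

end Aux

theorem stmt_5 {V : Type*} [Fintype V] (G : SimpleGraph V) (hG : G.Connected)
    (x y : V) (hxy : G.Adj x y)
    (hconn : (G.deleteEdges {s(x, y)}).Connected) :
    mu G ≤ 2 * mu (G.deleteEdges {s(x, y)}) ∧
      mu (G.deleteEdges {s(x, y)}) ≤ 2 * mu G := by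
  classical
  set G' := G.deleteEdges {s(x, y)} with hG'
  have hswap : G.deleteEdges {s(y, x)} = G' := by rw [hG', Sym2.eq_swap]
  have hdle : ∀ u v : V, G.dist u v ≤ G'.dist u v := by
    intro u v
    obtain ⟨p', hp'⟩ := (hconn u v).exists_walk_length_eq_dist
    have hsub : ∀ e ∈ p'.edges, e ∈ G.edgeSet := fun e he => by
      have := p'.edges_subset_edgeSet he
      rw [hG', edgeSet_deleteEdges] at this
      exact this.1
    have := G.dist_le (p'.transfer G hsub)
    rwa [SimpleGraph.Walk.length_transfer, hp'] at this
  constructor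
  · -- mu G ≤ 2 * mu G'
    obtain ⟨X, hX, hXcard⟩ := exists_mu_set G
    set A : Set V := {v ∈ X | G.dist v x ≤ G.dist v y} with hA
    have hAsub : A ⊆ X := fun v hv => hv.1
    have hMVA : ∀ (Y : Set V), Y ⊆ X →
        (∀ u ∈ Y, ∀ v ∈ Y, ∀ (p : G.Walk u v), p.length = G.dist u v → s(x, y) ∉ p.edges) →
        IsMVSet G' Y := by
      intro Y hYX hne u hu v hv
      obtain ⟨p, hp, hpav⟩ := hX u (hYX hu) v (hYX hv)
      have hedge : s(x, y) ∉ p.edges := hne u hu v hv p hp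
      have hsub : ∀ e ∈ p.edges, e ∈ G'.edgeSet := fun e he => by
        rw [hG', edgeSet_deleteEdges]
        exact ⟨p.edges_subset_edgeSet he, fun hmem => hedge (by
          simpa using hmem ▸ he)⟩
      refine ⟨p.transfer G' hsub, ?_, ?_⟩
      · rw [SimpleGraph.Walk.length_transfer, hp]
        exact le_antisymm (hdle u v) (by
          have := G'.dist_le (p.transfer G' hsub)
          rwa [SimpleGraph.Walk.length_transfer, hp] at this)
      · intro w hw hwY
        rw [SimpleGraph.Walk.support_transfer] at hw
        exact hpav w hw (hYX hwY)
    have hMVA' : IsMVSet G' A := by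
      apply hMVA A hAsub
      intro u hu v hv p hp
      exact no_edge hG hxy hu.2 hv.2 hp
    have hMVB : IsMVSet G' (X \ A) := by
      apply hMVA (X \ A) Set.diff_subset
      intro u hu v hv p hp
      have hu2 : G.dist u y ≤ G.dist u x := by
        by_contra hcon
        exact hu.2 ⟨hu.1, by omega⟩
      have hv2 : G.dist v y ≤ G.dist v x := by
        by_contra hcon
        exact hv.2 ⟨hv.1, by omega⟩
      have := no_edge hG hxy.symm hu2 hv2 hp
      rwa [Sym2.eq_swap] at this
    calc mu G = X.ncard := hXcard.symm
      _ = (A ∪ (X \ A)).ncard := by rw [Set.union_diff_cancel hAsub]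
      _ ≤ A.ncard + (X \ A).ncard := Set.ncard_union_le _ _
      _ ≤ mu G' + mu G' := Nat.add_le_add (mv_le_mu hMVA') (mv_le_mu hMVB)
      _ = 2 * mu G' := (two_mul _).symm
  · -- mu G' ≤ 2 * mu G
    obtain ⟨X, hX, hXcard⟩ := exists_mu_set G'
    set A : Set V := {v ∈ X | G'.dist v x ≤ G'.dist v y} with hA
    have hAsub : A ⊆ X := fun v hv => hv.1
    have hMVA : ∀ (Y : Set V), Y ⊆ X →
        (∀ u ∈ Y, ∀ v ∈ Y, G.dist u v = G'.dist u v) → IsMVSet G Y := by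
      intro Y hYX hdeq u hu v hv
      obtain ⟨p, hp, hpav⟩ := hX u (hYX hu) v (hYX hv)
      have hsub : ∀ e ∈ p.edges, e ∈ G.edgeSet := fun e he => by
        have := p.edges_subset_edgeSet he
        rw [hG', edgeSet_deleteEdges] at this
        exact this.1
      refine ⟨p.transfer G hsub, ?_, ?_⟩
      · rw [SimpleGraph.Walk.length_transfer, hp, hdeq u hu v hv]
      · intro w hw hwY
        rw [SimpleGraph.Walk.support_transfer] at hw
        exact hpav w hw (hYX hwY)
    have hMVA' : IsMVSet G A := by
      apply hMVA A hAsub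
      intro u hu v hv
      exact dist_eq_del hG hconn hu.2 hv.2
    have hMVB : IsMVSet G (X \ A) := by
      apply hMVA (X \ A) Set.diff_subset
      intro u hu v hv
      have hu2 : G'.dist u y ≤ G'.dist u x := by
        by_contra hcon
        exact hu.2 ⟨hu.1, by omega⟩
      have hv2 : G'.dist v y ≤ G'.dist v x := by
        by_contra hcon
        exact hv.2 ⟨hv.1, by omega⟩
      have hconn2 : (G.deleteEdges {s(y, x)}).Connected := by rwa [hswap]
      have := dist_eq_del hG hconn2 (x := y) (y := x) (u := u) (v := v)
        (by rwa [hswap]) (by rwa [hswap])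
      rwa [hswap] at this
    calc mu G' = X.ncard := hXcard.symm
      _ = (A ∪ (X \ A)).ncard := by rw [Set.union_diff_cancel hAsub]
      _ ≤ A.ncard + (X \ A).ncard := Set.ncard_union_le _ _
      _ ≤ mu G + mu G := Nat.add_le_add (mv_le_mu hMVA') (mv_le_mu hMVB)
      _ = 2 * mu G := (two_mul _).symm
end

section
/- If G is a connected graph, e ∈ E(G), and G−e is connected, then μ_o(G−e) ≥ (1/6)·μ_o(G), where μ_o is the outer mutual-visibility number. -/
open SimpleGraph

/-!
Let `X` be an outer mutual-visibility set of `G` and `e = xy`. A shortest path that uses `e`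
runs from a vertex strictly closer to one end of `e` to a vertex strictly closer to the other.
Hence a vertex `u ∈ X` equidistant from `x` and `y` sees every vertex along shortest paths
avoiding `e`; so does a vertex `u ∈ X` closer to `y` that sees `x` along an `e`-free shortest
path meeting `X` only at its ends, since a shortest path from `u` crossing `e` goes from `y`
to `x` and its part up to `x` can be replaced. The other vertices of `X` closer to `y` either
have an `e`-free shortest path to `x` (shielded) or have none (edge-dependent); each of these
classes, as well as the two symmetric classes on the side of `x`, is an outer
mutual-visibility set of `G - e`. So `X` is covered by five outer mutual-visibility sets of
`G - e`, and `μₒ(G) ≤ 5 μₒ(G - e)`.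
-/

namespace SimpleGraph.Walk

variable {V : Type*} {G : SimpleGraph V} {u v : V}

theorem dist_eq_of_toWalk_isSubwalk {P : G.Walk u v} (hP : P.length = G.dist u v) {a b : V}
    (h : G.Adj a b) (hP_ab : h.toWalk.IsSubwalk P) :
    G.dist u b = G.dist u a + 1 ∧ G.dist v a = G.dist v b + 1 ∧
      G.dist u v = G.dist u a + 1 + G.dist v b := by
  obtain ⟨p, q, rfl⟩ := hP_ab
  have hp : p.length = G.dist u a :=
    length_eq_dist_of_subwalk hP ⟨nil, h.toWalk.append q, by rw [append_assoc]; rfl⟩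
  have hpa : (p.append h.toWalk).length = G.dist u b :=
    length_eq_dist_of_subwalk hP ⟨nil, q, by simp⟩
  have hq : q.length = G.dist b v :=
    length_eq_dist_of_subwalk hP ⟨p.append h.toWalk, nil, by simp⟩
  have haq : (h.toWalk.append q).length = G.dist a v :=
    length_eq_dist_of_subwalk hP ⟨p, nil, by rw [append_nil, append_assoc]⟩
  simp only [length_append, Adj.length_toWalk] at hP hpa haq
  rw [dist_comm (u := v), dist_comm (u := v)]
  omega

theorem dist_eq_of_mem_edges {P : G.Walk u v} (hP : P.length = G.dist u v) {a b : V}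
    (he : s(a, b) ∈ P.edges) :
    (G.dist u b = G.dist u a + 1 ∧ G.dist v a = G.dist v b + 1 ∧
      G.dist u v = G.dist u a + 1 + G.dist v b) ∨
    (G.dist u a = G.dist u b + 1 ∧ G.dist v b = G.dist v a + 1 ∧
      G.dist u v = G.dist u b + 1 + G.dist v a) := by
  have h := P.adj_of_mem_edges he
  rcases (isSubwalk_toWalk_iff_mem_edges h).mpr he with hab | hba
  · exact .inl (dist_eq_of_toWalk_isSubwalk hP h hab)
  · exact .inr (dist_eq_of_toWalk_isSubwalk hP h.symm hba)

theorem mk_notMem_edges_of_dist {P : G.Walk u v} (hP : P.length = G.dist u v) {x y : V}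
    (hu : G.dist u y < G.dist u x) (hv : G.dist v y ≤ G.dist v x) : s(x, y) ∉ P.edges := by
  intro he
  rcases dist_eq_of_mem_edges hP he with h | h <;> omega

theorem exists_eq_append_cons_last_mem (S : Set V) (p : G.Walk u v)
    (hS : ∃ z ∈ p.support, z ∈ S ∧ z ≠ v) :
    ∃ (w s : V) (h : G.Adj w s) (q : G.Walk u w) (r : G.Walk s v),
      p = q.append (cons h r) ∧ w ∈ S ∧ ∀ z ∈ r.support, z ∈ S → z = v := by
  induction p with
  | nil => simp at hS
  | @cons a c b h p ih =>
    by_cases hp : ∀ z ∈ p.support, z ∈ S → z = b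
    · obtain ⟨z, hz, hzS, hzb⟩ := hS
      have hza : z = a := by
        rw [support_cons, List.mem_cons] at hz
        exact hz.resolve_right fun hz ↦ hzb (hp z hz hzS)
      exact ⟨a, c, h, nil, p, by simp, hza ▸ hzS, hp⟩
    · obtain ⟨w, s, hws, q, r, rfl, hw, hr⟩ := ih (by simpa using hp)
      exact ⟨w, s, hws, cons h q, r, rfl, hw, hr⟩

end SimpleGraph.Walk

section EdgeDeletion

variable {V : Type*} {G : SimpleGraph V}

def IsMVisibleAvoiding (G : SimpleGraph V) (e : Sym2 V) (S : Set V) (u v : V) : Prop :=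
  ∃ P : G.Walk u v, P.length = G.dist u v ∧ e ∉ P.edges ∧
    ∀ w ∈ P.support, w ∈ S → w = u ∨ w = v

theorem IsMVisibleAvoiding.mono {e : Sym2 V} {S T : Set V} {u v : V}
    (h : IsMVisibleAvoiding G e S u v) (hTS : T ⊆ S) : IsMVisibleAvoiding G e T u v :=
  let ⟨P, hP, he, hS⟩ := h
  ⟨P, hP, he, fun w hw hwT ↦ hS w hw (hTS hwT)⟩

theorem IsMVisibleAvoiding.isMVisible_deleteEdges {e : Sym2 V} {S : Set V} {u v : V}
    (h : IsMVisibleAvoiding G e S u v) : IsMVisible (G.deleteEdges {e}) S u v := by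
  obtain ⟨P, hP, he, hS⟩ := h
  set P' := P.toDeleteEdge e he
  have hdist : (G.deleteEdges {e}).dist u v = G.dist u v :=
    le_antisymm ((dist_le P').trans (by simp [P', hP]))
      (P'.reachable.dist_anti (G.deleteEdges_le _))
  exact ⟨P', by simp [P', hP, hdist], by simpa [P'] using hS⟩

variable {X : Set V} {x y : V}

theorem isMVisibleAvoiding_of_dist_eq (hX : IsOuterMVSet G X) {u : V} (hu : u ∈ X)
    (h : G.dist u x = G.dist u y) (v : V) : IsMVisibleAvoiding G s(x, y) X u v := by
  obtain ⟨P, hP, hS⟩ := hX u hu v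
  refine ⟨P, hP, fun he ↦ ?_, hS⟩
  rcases P.dist_eq_of_mem_edges hP he with h' | h' <;> omega

theorem isMVisibleAvoiding_of_far_endpoint (hX : IsOuterMVSet G X) {S : Set V} (hSX : S ⊆ X)
    {u : V} (hu : u ∈ S) (hux : G.dist u x = G.dist u y + 1)
    (hT : IsMVisibleAvoiding G s(x, y) S u x) (v : V) : IsMVisibleAvoiding G s(x, y) S u v := by
  obtain ⟨P, hP, hPS⟩ := hX u (hSX hu) v
  by_cases he : s(x, y) ∉ P.edges
  · exact ⟨P, hP, he, fun w hw hwS ↦ hPS w hw (hSX hwS)⟩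
  have hxy := P.adj_of_mem_edges (not_not.mp he)
  rcases (Walk.isSubwalk_toWalk_iff_mem_edges hxy).mpr (not_not.mp he) with hsub | hsub
  · have := (P.dist_eq_of_toWalk_isSubwalk hP hxy hsub).1
    omega
  -- `P` crosses the edge from `y` to `x`: replace its part up to `x` by the walk `T`.
  obtain ⟨T, hT, hTe, hTS⟩ := hT
  have hcross := P.dist_eq_of_toWalk_isSubwalk hP hxy.symm hsub
  have hnodup := (P.isPath_of_length_eq_dist hP).isTrail.edges_nodup
  obtain ⟨p, q, rfl⟩ := hsub
  have hq : q.length = G.dist x v :=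
    length_eq_dist_of_subwalk hP ⟨p.append hxy.symm.toWalk, .nil, by simp⟩
  have hqe : s(x, y) ∉ q.edges := by
    simp only [Walk.edges_append, Walk.edges_cons, Walk.edges_nil, List.append_assoc,
      List.cons_append, List.nil_append, List.nodup_append, List.nodup_cons] at hnodup
    rw [Sym2.eq_swap]
    exact hnodup.2.1.1
  have hxS : x ∈ S → x = v := by
    intro hxS
    refine (hPS x (by simp) (hSX hxS)).resolve_left ?_
    rintro rfl
    simp at hux
  refine ⟨T.append q, ?_, ?_, ?_⟩
  · rw [Walk.length_append, hT, hq, dist_comm (u := x)]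
    omega
  · simp [hTe, hqe]
  · intro w hw hwS
    rcases (Walk.mem_support_append_iff _ _).mp hw with hw | hw
    · rcases hTS w hw hwS with rfl | rfl
      exacts [.inl rfl, .inr (hxS hwS)]
    · exact hPS w (by simp [hw]) (hSX hwS)

end EdgeDeletion

section Partition

variable {V : Type*} {G : SimpleGraph V} {X : Set V} {x y : V}

def edgeAvoidingSet (G : SimpleGraph V) (X : Set V) (x y : V) : Set V :=
  {u ∈ X | ∀ v, IsMVisibleAvoiding G s(x, y) X u v}

def shieldedSet (G : SimpleGraph V) (X : Set V) (x y : V) : Set V :=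
  {u ∈ X | G.dist u x = G.dist u y + 1 ∧ IsMVisibleAvoiding G s(x, y) ∅ u x ∧
    ¬IsMVisibleAvoiding G s(x, y) X u x}

def edgeDependentSet (G : SimpleGraph V) (X : Set V) (x y : V) : Set V :=
  {u ∈ X | G.dist u x = G.dist u y + 1 ∧ ¬IsMVisibleAvoiding G s(x, y) ∅ u x}

theorem isOuterMVSet_edgeAvoidingSet :
    IsOuterMVSet (G.deleteEdges {s(x, y)}) (edgeAvoidingSet G X x y) :=
  fun _ hu v ↦ ((hu.2 v).mono fun _ hw ↦ hw.1).isMVisible_deleteEdges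

theorem isMVisibleAvoiding_shieldedSet (hX : IsOuterMVSet G X) {u : V}
    (hu : u ∈ shieldedSet G X x y) : IsMVisibleAvoiding G s(x, y) (shieldedSet G X x y) u x := by
  obtain ⟨huX, hux, ⟨R, hR, hRe, -⟩, -⟩ := id hu
  have hux' : u ≠ x := by rintro rfl; simp at hux
  obtain ⟨w, s, hws, q, r, rfl, hwX, hr⟩ :=
    R.exists_eq_append_cons_last_mem X ⟨u, R.start_mem_support, huX, hux'⟩
  have hq : q.length = G.dist u w := length_eq_dist_of_subwalk hR ⟨.nil, .cons hws r, by simp⟩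
  have hwr : (Walk.cons hws r).length = G.dist w x :=
    length_eq_dist_of_subwalk hR ⟨q, .nil, by simp⟩
  have hre : s(x, y) ∉ (Walk.cons hws r).edges := fun h ↦ hRe (by simp_all)
  have hw : w ∉ shieldedSet G X x y := by
    refine fun hw ↦ hw.2.2.2 ⟨.cons hws r, hwr, hre, fun z hz hzX ↦ ?_⟩
    rw [Walk.support_cons, List.mem_cons] at hz
    exact hz.imp id (hr z · hzX)
  obtain ⟨P, hP, hPX⟩ := hX u huX w
  have hPe : s(x, y) ∉ P.edges := by
    intro he
    simp only [Walk.length_append, Walk.length_cons] at hR hwr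
    rcases P.dist_eq_of_mem_edges hP he with h | h <;> rw [dist_comm (u := w)] at hwr <;> omega
  refine ⟨P.append (.cons hws r), ?_, by simp_all, fun z hz hzS ↦ ?_⟩
  · simp only [Walk.length_append, Walk.length_cons] at hR hwr ⊢
    omega
  rcases (Walk.mem_support_append_iff _ _).mp hz with hz | hz
  · rcases hPX z hz hzS.1 with rfl | rfl
    exacts [.inl rfl, absurd hzS hw]
  · rw [Walk.support_cons, List.mem_cons] at hz
    rcases hz with rfl | hz
    exacts [absurd hzS hw, .inr (hr z hz hzS.1)]

theorem isOuterMVSet_shieldedSet (hX : IsOuterMVSet G X) :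
    IsOuterMVSet (G.deleteEdges {s(x, y)}) (shieldedSet G X x y) := fun _ hu v ↦
  (isMVisibleAvoiding_of_far_endpoint hX (fun _ hw ↦ hw.1) hu hu.2.1
    (isMVisibleAvoiding_shieldedSet hX hu) v).isMVisible_deleteEdges

theorem dist_le_of_mem_edgeDependentSet_of_adj (hG : G.Connected) {w s : V}
    (hw : w ∈ edgeDependentSet G X x y) (hws : (G.deleteEdges {s(x, y)}).Adj w s) :
    G.dist s y ≤ G.dist s x := by
  -- Otherwise `w`, `s` followed by a shortest `s,x`-walk would be a shortest `w,x`-walk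
  -- avoiding the edge.
  by_contra! hs
  obtain ⟨K, hK⟩ := hG.exists_walk_length_eq_dist s x
  have hKe : s(x, y) ∉ K.edges := by
    rw [Sym2.eq_swap]
    exact K.mk_notMem_edges_of_dist hK hs (by simp)
  obtain ⟨hws, hne⟩ := deleteEdges_adj.mp hws
  have hdist : G.dist s y ≤ G.dist s w + G.dist w y := hG.dist_triangle
  rw [dist_eq_one_iff_adj.mpr hws.symm] at hdist
  have hW : (Walk.cons hws K).length ≤ G.dist w x := by
    rw [Walk.length_cons, hK, hw.2.1]
    omega
  exact hw.2.2 ⟨.cons hws K, le_antisymm hW (dist_le _),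
    by simpa [hKe, eq_comm] using hne, by simp⟩

theorem isOuterMVSet_edgeDependentSet (hG : G.Connected)
    (hconn : (G.deleteEdges {s(x, y)}).Connected) (hX : IsOuterMVSet G X) :
    IsOuterMVSet (G.deleteEdges {s(x, y)}) (edgeDependentSet G X x y) := by
  rintro u ⟨huX, hux, -⟩ t
  obtain ⟨Q, hQ⟩ := hconn.exists_walk_length_eq_dist u t
  by_cases hQZ : ∀ z ∈ Q.support, z ∈ edgeDependentSet G X x y → z = t
  · exact ⟨Q, hQ, fun z hz hzZ ↦ .inr (hQZ z hz hzZ)⟩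
  -- `w` is the last vertex of `Q` in the set, `s` its successor; `s` is not closer to `x` than
  -- to `y`, so the `X`-visibility geodesic from `u` to `s` avoids the edge and can replace `q`.
  obtain ⟨w, s, hws, q, r, rfl, hw, hr⟩ :=
    Q.exists_eq_append_cons_last_mem _ (by simpa using hQZ)
  obtain ⟨P, hP, hPX⟩ := hX u huX s
  have hPe : s(x, y) ∉ P.edges := P.mk_notMem_edges_of_dist hP (by omega)
    (dist_le_of_mem_edgeDependentSet_of_adj hG hw hws)
  have hPq : P.length ≤ q.length + 1 := by
    simpa [hP] using dist_le ((q.concat hws).mapLe (G.deleteEdges_le _))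
  refine ⟨(P.toDeleteEdge _ hPe).append r, le_antisymm ?_ (dist_le _), fun z hz hzZ ↦ ?_⟩
  · simp only [Walk.length_append, Walk.length_cons, Walk.length_transfer] at hQ ⊢
    omega
  rcases (Walk.mem_support_append_iff _ _).mp hz with hz | hz
  · rcases hPX z (by simpa using hz) hzZ.1 with rfl | rfl
    exacts [.inl rfl, .inr (hr z r.start_mem_support hzZ)]
  · exact .inr (hr z hz hzZ)

theorem edgeAvoidingSet_comm : edgeAvoidingSet G X y x = edgeAvoidingSet G X x y := by
  rw [edgeAvoidingSet, edgeAvoidingSet, Sym2.eq_swap]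

theorem mem_union_of_dist_eq_add_one (hX : IsOuterMVSet G X) {u : V} (hu : u ∈ X)
    (hux : G.dist u x = G.dist u y + 1) :
    u ∈ edgeAvoidingSet G X x y ∪ shieldedSet G X x y ∪ edgeDependentSet G X x y := by
  by_cases hA : IsMVisibleAvoiding G s(x, y) X u x
  · exact .inl (.inl ⟨hu, isMVisibleAvoiding_of_far_endpoint hX subset_rfl hu hux hA⟩)
  by_cases hB : IsMVisibleAvoiding G s(x, y) ∅ u x
  exacts [.inl (.inr ⟨hu, hux, hB, hA⟩), .inr ⟨hu, hux, hB⟩]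

theorem subset_union_of_adj (hX : IsOuterMVSet G X) (hxy : G.Adj x y) :
    X ⊆ edgeAvoidingSet G X x y ∪ shieldedSet G X x y ∪ edgeDependentSet G X x y ∪
      shieldedSet G X y x ∪ edgeDependentSet G X y x := by
  intro u hu
  have : G.dist u x = G.dist u y ∨ G.dist u x = G.dist u y + 1 ∨
      G.dist u y = G.dist u x + 1 := by
    rcases hxy.diff_dist_adj (u := u) with h | h | h <;> omega
  rcases this with h | h | h
  · exact .inl (.inl (.inl (.inl ⟨hu, isMVisibleAvoiding_of_dist_eq hX hu h⟩)))
  · have := mem_union_of_dist_eq_add_one hX hu h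
    simp only [Set.mem_union] at this ⊢
    tauto
  · have := mem_union_of_dist_eq_add_one hX hu h
    rw [edgeAvoidingSet_comm] at this
    simp only [Set.mem_union] at this ⊢
    tauto

end Partition

section Counting

variable {V : Type*} {G : SimpleGraph V}

theorem ncard_le_muO [Finite V] {S : Set V} (hS : IsOuterMVSet G S) : S.ncard ≤ muO G :=
  le_csSup ⟨Nat.card V, by rintro _ ⟨T, -, rfl⟩; exact T.ncard_le_card⟩ ⟨S, hS, rfl⟩

theorem muO_le {n : ℕ} (h : ∀ X, IsOuterMVSet G X → X.ncard ≤ n) : muO G ≤ n :=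
  csSup_le ⟨0, ∅, fun _ h ↦ h.elim, Set.ncard_empty _⟩ <| by
    rintro _ ⟨X, hX, rfl⟩
    exact h X hX

theorem muO_le_five_mul_muO_deleteEdges [Finite V] (hG : G.Connected) {x y : V}
    (hxy : G.Adj x y) (hconn : (G.deleteEdges {s(x, y)}).Connected) :
    muO G ≤ 5 * muO (G.deleteEdges {s(x, y)}) := by
  refine muO_le fun X hX ↦ ?_
  have hconn' := hconn
  rw [Sym2.eq_swap] at hconn'
  have h₁ := ncard_le_muO (isOuterMVSet_edgeAvoidingSet (G := G) (X := X) (x := x) (y := y))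
  have h₂ := ncard_le_muO (isOuterMVSet_shieldedSet (x := x) (y := y) hX)
  have h₃ := ncard_le_muO (isOuterMVSet_edgeDependentSet hG hconn hX)
  have h₄ := ncard_le_muO (isOuterMVSet_shieldedSet (x := y) (y := x) hX)
  have h₅ := ncard_le_muO (isOuterMVSet_edgeDependentSet hG hconn' hX)
  rw [Sym2.eq_swap] at h₄ h₅
  calc X.ncard ≤ _ := Set.ncard_le_ncard (subset_union_of_adj hX hxy)
    _ ≤ _ := by grw [Set.ncard_union_le, Set.ncard_union_le, Set.ncard_union_le,
        Set.ncard_union_le]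
    _ ≤ _ := by omega

end Counting

theorem stmt_7 {V : Type*} [Fintype V] (G : SimpleGraph V) (hG : G.Connected)
    (x y : V) (hxy : G.Adj x y)
    (hconn : (G.deleteEdges {s(x, y)}).Connected) :
    muO G ≤ 6 * muO (G.deleteEdges {s(x, y)}) :=
  (muO_le_five_mul_muO_deleteEdges hG hxy hconn).trans (by omega)
end

section
/- If G is a connected graph, e ∈ E(G), and G−e is connected, then μ_t(G−e) ≤ μ_t(G) + 2, where μ_t is the total mutual-visibility number. -/
open SimpleGraph

/-- key walk lemma -/
lemma key_lem {V : Type*} (G : SimpleGraph V) (hG : G.Connected) (x y : V) :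
    ∀ {u v : V} (p : G.Walk u v), s(x,y) ∈ p.edges →
      G.dist u x + 1 + G.dist y v ≤ p.length ∨ G.dist u y + 1 + G.dist x v ≤ p.length := by
  intro u v p
  induction p with
  | nil => simp
  | @cons u u' v h q ih =>
    intro he
    rw [SimpleGraph.Walk.edges_cons, List.mem_cons] at he
    rcases he with he | he
    · rw [Sym2.eq_iff] at he
      have h2 := SimpleGraph.dist_le q
      rcases he with ⟨rfl, rfl⟩ | ⟨rfl, rfl⟩
      · left
        simp only [SimpleGraph.Walk.length_cons, SimpleGraph.dist_self]
        omega
      · right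
        simp only [SimpleGraph.Walk.length_cons, SimpleGraph.dist_self]
        omega
    · have huu' : G.dist u u' ≤ 1 := by
        have := SimpleGraph.dist_le (SimpleGraph.Walk.cons h SimpleGraph.Walk.nil)
        simpa using this
      have t1 : G.dist u x ≤ G.dist u u' + G.dist u' x := hG.dist_triangle
      have t2 : G.dist u y ≤ G.dist u u' + G.dist u' y := hG.dist_triangle
      rw [SimpleGraph.Walk.length_cons]
      rcases ih he with h' | h'
      · left; omega
      · right; omega

lemma dist_le_del {V : Type*} (G : SimpleGraph V) (s : Set (Sym2 V))
    (hconn : (G.deleteEdges s).Connected) (u v : V) :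
    G.dist u v ≤ (G.deleteEdges s).dist u v := by
  obtain ⟨p, hp⟩ := hconn.exists_walk_length_eq_dist u v
  have := SimpleGraph.dist_le (p.transfer G (fun e he =>
    SimpleGraph.edgeSet_mono (SimpleGraph.deleteEdges_le s) (p.edges_subset_edgeSet he)))
  rwa [SimpleGraph.Walk.length_transfer, hp] at this

/-- if dist in G is strictly less, every shortest G-walk contains the edge -/
lemma all_shortest_use {V : Type*} (G : SimpleGraph V) (x y : V)
    {u v : V} (hlt : G.dist u v < (G.deleteEdges {s(x,y)}).dist u v)
    (p : G.Walk u v) (hp : p.length = G.dist u v) : s(x,y) ∈ p.edges := by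
  by_contra he
  have hedges : ∀ e ∈ p.edges, e ∈ (G.deleteEdges {s(x,y)}).edgeSet := by
    intro e hep
    rw [SimpleGraph.edgeSet_deleteEdges]
    exact ⟨p.edges_subset_edgeSet hep, by simp; rintro rfl; exact he hep⟩
  have := SimpleGraph.dist_le (p.transfer _ hedges)
  rw [SimpleGraph.Walk.length_transfer, hp] at this
  omega

/-- case-2 core, parameterized so we can apply it symmetrically -/
lemma case2 {V : Type*} (G : SimpleGraph V) (hG : G.Connected) (x y : V) (hxy : G.Adj x y)
    (hconn : (G.deleteEdges {s(x,y)}).Connected)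
    (X : Set V) (hX : IsTotalMVSet (G.deleteEdges {s(x,y)}) X)
    (u v : V) (hd : G.dist u v = G.dist u x + 1 + G.dist y v) :
    ∃ P : G.Walk u v, P.length = G.dist u v ∧
      ∀ w ∈ P.support, w ∈ X \ {x, y} → w = u ∨ w = v := by
  set H := G.deleteEdges {s(x,y)} with hH
  -- dist_H u x = dist_G u x
  have h1 : H.dist u x = G.dist u x := by
    by_contra hne
    have hlt : G.dist u x < H.dist u x :=
      lt_of_le_of_ne (dist_le_del G _ hconn u x) (Ne.symm hne)
    obtain ⟨p, hp⟩ := hG.exists_walk_length_eq_dist u x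
    have hme := all_shortest_use G x y hlt p hp
    rcases key_lem G hG x y p hme with h' | h'
    · rw [hp] at h'; omega
    · rw [hp, SimpleGraph.dist_self] at h'
      have t : G.dist u v ≤ G.dist u y + G.dist y v := hG.dist_triangle
      omega
  have h2 : H.dist y v = G.dist y v := by
    by_contra hne
    have hlt : G.dist y v < H.dist y v :=
      lt_of_le_of_ne (dist_le_del G _ hconn y v) (Ne.symm hne)
    obtain ⟨p, hp⟩ := hG.exists_walk_length_eq_dist y v
    have hme := all_shortest_use G x y hlt p hp
    rcases key_lem G hG x y p hme with h' | h'
    · rw [hp] at h'; omega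
    · rw [hp, SimpleGraph.dist_self] at h'
      have t : G.dist u v ≤ G.dist u x + G.dist x v := hG.dist_triangle
      omega
  obtain ⟨P1, l1, s1⟩ := hX u x
  obtain ⟨P2, l2, s2⟩ := hX y v
  have hHle : ∀ {a b : V} (q : H.Walk a b), ∀ e ∈ q.edges, e ∈ G.edgeSet := fun q e he =>
    SimpleGraph.edgeSet_mono (SimpleGraph.deleteEdges_le _) (q.edges_subset_edgeSet he)
  refine ⟨(P1.transfer G (hHle P1)).append (SimpleGraph.Walk.cons hxy (P2.transfer G (hHle P2))),
    ?_, ?_⟩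
  · rw [SimpleGraph.Walk.length_append, SimpleGraph.Walk.length_cons,
      SimpleGraph.Walk.length_transfer, SimpleGraph.Walk.length_transfer, l1, l2, h1, h2]
    omega
  · intro w hw hwX
    rw [SimpleGraph.Walk.mem_support_append_iff] at hw
    rcases hw with hw | hw
    · rw [SimpleGraph.Walk.support_transfer] at hw
      rcases s1 w hw hwX.1 with rfl | rfl
      · exact Or.inl rfl
      · exact absurd (by simp : w ∈ ({w, y} : Set V)) hwX.2
    · rw [SimpleGraph.Walk.support_cons, List.mem_cons] at hw
      rcases hw with rfl | hw
      · exact absurd (by simp : w ∈ ({w, y} : Set V)) hwX.2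
      · rw [SimpleGraph.Walk.support_transfer] at hw
        rcases s2 w hw hwX.1 with rfl | rfl
        · exact absurd (by simp : w ∈ ({x, w} : Set V)) hwX.2
        · exact Or.inr rfl

lemma main_vis {V : Type*} (G : SimpleGraph V) (hG : G.Connected) (x y : V) (hxy : G.Adj x y)
    (hconn : (G.deleteEdges {s(x,y)}).Connected)
    (X : Set V) (hX : IsTotalMVSet (G.deleteEdges {s(x,y)}) X) :
    IsTotalMVSet G (X \ {x, y}) := by
  intro u v
  set H := G.deleteEdges {s(x,y)} with hH
  by_cases hd : H.dist u v = G.dist u v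
  · obtain ⟨Q, hQl, hQs⟩ := hX u v
    refine ⟨Q.transfer G (fun e he =>
      SimpleGraph.edgeSet_mono (SimpleGraph.deleteEdges_le _) (Q.edges_subset_edgeSet he)),
      ?_, ?_⟩
    · rw [SimpleGraph.Walk.length_transfer, hQl, hd]
    · intro w hw hwX
      rw [SimpleGraph.Walk.support_transfer] at hw
      exact hQs w hw hwX.1
  · have hlt : G.dist u v < H.dist u v :=
      lt_of_le_of_ne (dist_le_del G _ hconn u v) (Ne.symm hd)
    obtain ⟨p, hp⟩ := hG.exists_walk_length_eq_dist u v
    have hme := all_shortest_use G x y hlt p hp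
    have htri1 : G.dist u v ≤ G.dist u x + G.dist x v := hG.dist_triangle
    have htri2 : G.dist u v ≤ G.dist u y + G.dist y v := hG.dist_triangle
    have hxv : G.dist x v ≤ 1 + G.dist y v := by
      have : G.dist x v ≤ G.dist x y + G.dist y v := hG.dist_triangle
      have h1 : G.dist x y ≤ 1 := by
        have := SimpleGraph.dist_le (SimpleGraph.Walk.cons hxy SimpleGraph.Walk.nil)
        simpa using this
      omega
    have hyv : G.dist y v ≤ 1 + G.dist x v := by
      have : G.dist y v ≤ G.dist y x + G.dist x v := hG.dist_triangle
      have h1 : G.dist y x ≤ 1 := by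
        have := SimpleGraph.dist_le (SimpleGraph.Walk.cons hxy.symm SimpleGraph.Walk.nil)
        simpa using this
      omega
    rcases key_lem G hG x y p hme with h' | h'
    · rw [hp] at h'
      have hd' : G.dist u v = G.dist u x + 1 + G.dist y v := by omega
      exact case2 G hG x y hxy hconn X hX u v hd'
    · rw [hp] at h'
      have hd' : G.dist u v = G.dist u y + 1 + G.dist x v := by omega
      have hswap : s(y,x) = s(x,y) := Sym2.eq_swap
      have hconn' : (G.deleteEdges {s(y,x)}).Connected := by rwa [hswap]
      have hX' : IsTotalMVSet (G.deleteEdges {s(y,x)}) X := by rwa [hswap]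
      have hpair : ({y, x} : Set V) = {x, y} := Set.pair_comm y x
      have := case2 G hG y x hxy.symm hconn' X hX' u v hd'
      rwa [hpair] at this

theorem stmt_8 {V : Type*} [Fintype V] (G : SimpleGraph V) (hG : G.Connected)
    (x y : V) (hxy : G.Adj x y)
    (hconn : (G.deleteEdges {s(x, y)}).Connected) :
    muT (G.deleteEdges {s(x, y)}) ≤ muT G + 2 := by
  classical
  set H := G.deleteEdges {s(x,y)} with hH
  set S : Set ℕ := {n | ∃ X : Set V, IsTotalMVSet H X ∧ X.ncard = n} with hS
  have hbdd : ∀ T : SimpleGraph V, BddAbove {n | ∃ X : Set V, IsTotalMVSet T X ∧ X.ncard = n} := by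
    intro T
    refine ⟨Fintype.card V, ?_⟩
    rintro n ⟨X, _, rfl⟩
    calc X.ncard ≤ (Set.univ : Set V).ncard :=
          Set.ncard_le_ncard (Set.subset_univ X) Set.finite_univ
      _ = Fintype.card V := by rw [Set.ncard_univ, Nat.card_eq_fintype_card]
  have hne : S.Nonempty := by
    refine ⟨0, ∅, ?_, Set.ncard_empty V⟩
    intro u v
    obtain ⟨p, hp⟩ := hconn.exists_walk_length_eq_dist u v
    exact ⟨p, hp, fun w _ hw => absurd hw (Set.notMem_empty w)⟩
  have hmem : muT H ∈ S := Nat.sSup_mem hne (hbdd H)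
  obtain ⟨X, hXtot, hXc⟩ := hmem
  have hvis : IsTotalMVSet G (X \ {x, y}) := main_vis G hG x y hxy hconn X hXtot
  have hle : (X \ {x, y}).ncard ≤ muT G :=
    le_csSup (hbdd G) ⟨X \ {x, y}, hvis, rfl⟩
  have hcard : X.ncard ≤ (X \ {x, y}).ncard + 2 := by
    have hsub : X ⊆ (X \ {x, y}) ∪ {x, y} := by
      intro a ha
      by_cases h : a ∈ ({x, y} : Set V)
      · exact Or.inr h
      · exact Or.inl ⟨ha, h⟩
    calc X.ncard ≤ ((X \ {x, y}) ∪ {x, y}).ncard :=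
          Set.ncard_le_ncard hsub (Set.toFinite _)
      _ ≤ (X \ {x, y}).ncard + ({x, y} : Set V).ncard := Set.ncard_union_le _ _
      _ ≤ (X \ {x, y}).ncard + 2 := by
          have : ({x, y} : Set V).ncard ≤ 2 := by
            calc ({x, y} : Set V).ncard ≤ ({y} : Set V).ncard + 1 := Set.ncard_insert_le x {y}
              _ = 2 := by rw [Set.ncard_singleton]
          omega
    
  omega
end

section
/- If G is a connected graph, x ∈ V(G), and G−x is connected, then μ(G−x) ≤ 2·μ(G), where μ is the mutual-visibility number. -/
open SimpleGraph

/-! Let `X` be a largest mutual-visibility set of `G - x` and let `W ⊆ X` consist of the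
vertices of `X` that are `X`-visible from `x` in `G`. Two vertices of `X` are either `X`-visible
in `G` (by a shortest path of `G - x` that is also shortest in `G`), or `x` lies on a shortest
path between them. In the second case, shortest paths to `x` join vertices of `W`
without meeting `W` elsewhere; and for `X \ W`, the last vertex of `X` on a shortest path from
`u ∈ X` to `x` lies in `W`, which yields a shortest `u,x`-path meeting `X \ W` only at `u`.
So `W` and `X \ W` are both mutual-visibility sets of `G`, and `|X| ≤ 2 μ(G)`. -/

namespace SimpleGraph

variable {V : Type*} {G : SimpleGraph V}

lemma Walk.dist_add_dist_of_mem_support {u v w : V} {p : G.Walk u v}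
    (hp : p.length = G.dist u v) (hw : w ∈ p.support) :
    G.dist u w + G.dist w v = G.dist u v := by
  classical
  rw [← length_eq_dist_of_subwalk hp (p.isSubwalk_takeUntil hw),
    ← length_eq_dist_of_subwalk hp (p.isSubwalk_dropUntil hw), ← Walk.length_append,
    p.take_spec hw, hp]

@[simp]
lemma Walk.length_induce {s : Set V} {u v : V} (p : G.Walk u v) (hp : ∀ w ∈ p.support, w ∈ s) :
    (p.induce s hp).length = p.length := by
  induction p <;> simp [*]

end SimpleGraph

section Visibility

variable {V : Type*} {G : SimpleGraph V} {X Y : Set V} {u v z : V}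

namespace IsMVisible

lemma symm (h : IsMVisible G X u v) : IsMVisible G X v u := by
  obtain ⟨P, hP, hPX⟩ := h
  exact ⟨P.reverse, by rw [Walk.length_reverse, hP, dist_comm],
    fun w hw hwX => (hPX w (by simpa using hw) hwX).symm⟩

lemma mono_s9 (h : IsMVisible G X u v) (hYX : Y ⊆ X) : IsMVisible G Y u v := by
  obtain ⟨P, hP, hPX⟩ := h
  exact ⟨P, hP, fun w hw hwY => hPX w hw (hYX hwY)⟩

lemma append (h₁ : IsMVisible G X u z) (h₂ : IsMVisible G X z v) (hz : z ∉ X)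
    (hdist : G.dist u z + G.dist z v = G.dist u v) : IsMVisible G X u v := by
  obtain ⟨P, hP, hPX⟩ := h₁
  obtain ⟨Q, hQ, hQX⟩ := h₂
  refine ⟨P.append Q, by rw [Walk.length_append, hP, hQ, hdist], fun w hw hwX => ?_⟩
  have hwz : w ≠ z := by rintro rfl; exact hz hwX
  rcases (Walk.mem_support_append_iff P Q).mp hw with hw | hw
  · exact .inl ((hPX w hw hwX).resolve_right hwz)
  · exact .inr ((hQX w hw hwX).resolve_left hwz)

lemma image {W : Type*} {G' : SimpleGraph W} {X : Set W} {u v : W} (f : G' ↪g G)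
    (h : IsMVisible G' X u v) (hdist : G'.dist u v ≤ G.dist (f u) (f v)) :
    IsMVisible G (f '' X) (f u) (f v) := by
  obtain ⟨P, hP, hPX⟩ := h
  refine ⟨P.map f.toHom, ?_, ?_⟩
  · exact le_antisymm (by rw [Walk.length_map, hP]; exact hdist) (dist_le _)
  · rintro _ hw ⟨w, hwX, rfl⟩
    rw [Walk.support_map, List.mem_map] at hw
    obtain ⟨w', hw', hw'w⟩ := hw
    obtain rfl := f.injective hw'w
    exact (hPX w' hw' hwX).imp (congrArg f) (congrArg f)

end IsMVisible

lemma isMVisible_of_adj (h : G.Adj u v) : IsMVisible G X u v :=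
  ⟨h.toWalk, (dist_eq_one_iff_adj.mpr h).symm, by simp⟩

/-- The last vertex of `X ∪ {u}` on a shortest `u,v`-walk is `X`-visible from `v`. -/
lemma SimpleGraph.Walk.exists_mem_support_isMVisible (p : G.Walk u v)
    (hp : p.length = G.dist u v) :
    ∃ z ∈ p.support, (z = u ∨ z ∈ X) ∧ IsMVisible G X z v := by
  induction p with
  | nil => exact ⟨_, Walk.start_mem_support _, .inl rfl, Walk.nil, by simp, by simp⟩
  | @cons u u' v hadj q ih =>
    obtain ⟨z, hz, hzu' | hzX, hvis⟩ :=
      ih (length_eq_dist_of_subwalk hp (q.isSubwalk_cons hadj))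
    · subst hzu'
      by_cases hzX : z ∈ X
      · exact ⟨z, by simp, .inr hzX, hvis⟩
      · exact ⟨u, by simp, .inl rfl, (isMVisible_of_adj hadj).append hvis hzX
          ((Walk.cons hadj q).dist_add_dist_of_mem_support hp (by simp))⟩
    · exact ⟨z, by simp [hz], .inr hzX, hvis⟩

end Visibility

section MutualVisibilityNumber

variable {V : Type*} [Finite V] (G : SimpleGraph V)

lemma bddAbove_ncard_isMVSet : BddAbove {n | ∃ X : Set V, IsMVSet G X ∧ X.ncard = n} :=
  ⟨Nat.card V, by rintro _ ⟨X, -, rfl⟩; exact Set.ncard_le_card X⟩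

lemma exists_isMVSet_ncard_eq_mu : ∃ X : Set V, IsMVSet G X ∧ X.ncard = mu G :=
  Nat.sSup_mem (s := {n | ∃ X : Set V, IsMVSet G X ∧ X.ncard = n})
    ⟨0, ∅, fun _ hu => absurd hu (Set.notMem_empty _), Set.ncard_empty V⟩
    (bddAbove_ncard_isMVSet G)

variable {G}

lemma IsMVSet.ncard_le_mu {X : Set V} (h : IsMVSet G X) : X.ncard ≤ mu G :=
  le_csSup (bddAbove_ncard_isMVSet G) ⟨X, h, rfl⟩

end MutualVisibilityNumber

section ThroughVertex

variable {V : Type*} {G : SimpleGraph V} {Y : Set V} {x : V}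

def visibleFrom (G : SimpleGraph V) (Y : Set V) (x : V) : Set V :=
  {w ∈ Y | IsMVisible G Y w x}

lemma visibleFrom_subset : visibleFrom G Y x ⊆ Y := fun _ hw => hw.1

lemma isMVSet_visibleFrom (hx : x ∉ Y)
    (hY : ∀ u ∈ Y, ∀ v ∈ Y, IsMVisible G Y u v ∨ G.dist u x + G.dist x v = G.dist u v) :
    IsMVSet G (visibleFrom G Y x) := by
  intro u hu v hv
  rcases hY u hu.1 v hv.1 with hvis | hdist
  · exact hvis.mono_s9 visibleFrom_subset
  · exact (hu.2.mono_s9 visibleFrom_subset).append (hv.2.symm.mono_s9 visibleFrom_subset)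
      (fun hxW => hx hxW.1) hdist

lemma isMVisible_sdiff_visibleFrom (hG : G.Connected) (hx : x ∉ Y)
    (hY : ∀ u ∈ Y, ∀ v ∈ Y, IsMVisible G Y u v ∨ G.dist u x + G.dist x v = G.dist u v)
    {u : V} (hu : u ∈ Y) :
    IsMVisible G (Y \ visibleFrom G Y x) u x := by
  obtain ⟨q, hq⟩ := hG.exists_walk_length_eq_dist u x
  obtain ⟨z, hzq, rfl | hzY, hzx⟩ := q.exists_mem_support_isMVisible (X := Y) hq
  · exact hzx.mono_s9 Set.sdiff_subset
  have hdist := q.dist_add_dist_of_mem_support hq hzq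
  have huz : IsMVisible G Y u z := by
    refine (hY u hu z hzY).resolve_right fun hdist' => hx ?_
    have : G.dist z x = 0 := by rw [dist_comm (u := x)] at hdist'; omega
    rwa [← hG.dist_eq_zero_iff.mp this]
  exact (huz.mono_s9 Set.sdiff_subset).append (hzx.mono_s9 Set.sdiff_subset)
    (fun hz => hz.2 ⟨hzY, hzx⟩) hdist

lemma isMVSet_sdiff_visibleFrom (hG : G.Connected) (hx : x ∉ Y)
    (hY : ∀ u ∈ Y, ∀ v ∈ Y, IsMVisible G Y u v ∨ G.dist u x + G.dist x v = G.dist u v) :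
    IsMVSet G (Y \ visibleFrom G Y x) := by
  intro u hu v hv
  rcases hY u hu.1 v hv.1 with hvis | hdist
  · exact hvis.mono_s9 Set.sdiff_subset
  · exact (isMVisible_sdiff_visibleFrom hG hx hY hu.1).append
      (isMVisible_sdiff_visibleFrom hG hx hY hv.1).symm (fun hxY => hx hxY.1) hdist

lemma ncard_le_two_mul_mu [Finite V] (hG : G.Connected) (hx : x ∉ Y)
    (hY : ∀ u ∈ Y, ∀ v ∈ Y, IsMVisible G Y u v ∨ G.dist u x + G.dist x v = G.dist u v) :
    Y.ncard ≤ 2 * mu G :=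
  calc Y.ncard ≤ (Y \ visibleFrom G Y x).ncard + (visibleFrom G Y x).ncard :=
        Set.ncard_le_ncard_sdiff_add_ncard _ _
    _ ≤ mu G + mu G :=
        add_le_add (isMVSet_sdiff_visibleFrom hG hx hY).ncard_le_mu
          (isMVSet_visibleFrom hx hY).ncard_le_mu
    _ = 2 * mu G := (two_mul _).symm

end ThroughVertex

lemma IsMVisible.image_or_dist_add_dist_eq {V : Type*} {G : SimpleGraph V} {x : V}
    {X : Set {v | v ≠ x}} {u v : {v | v ≠ x}} (h : IsMVisible (G.induce {v | v ≠ x}) X u v) :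
    IsMVisible G (Subtype.val '' X) u v ∨ G.dist u x + G.dist x v = G.dist u v := by
  have hreach : G.Reachable u v := by
    obtain ⟨P, -, -⟩ := h
    exact (P.map (Embedding.induce _).toHom).reachable
  obtain ⟨q, hq⟩ := hreach.exists_walk_length_eq_dist
  by_cases hxq : x ∈ q.support
  · exact .inr (q.dist_add_dist_of_mem_support hq hxq)
  · refine .inl (h.image (Embedding.induce _) ?_)
    have hq' : ∀ w ∈ q.support, w ∈ {v | v ≠ x} := fun w hw hwx => hxq (hwx ▸ hw)
    calc _ ≤ (q.induce _ hq').length := dist_le _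
      _ = q.length := Walk.length_induce q hq'
      _ = _ := hq

theorem stmt_9_general {V : Type*} [Fintype V] (G : SimpleGraph V) (hG : G.Connected)
    (x : V) :
    mu (G.induce {v | v ≠ x}) ≤ 2 * mu G := by
  obtain ⟨X, hX, hcard⟩ := exists_isMVSet_ncard_eq_mu (G.induce {v | v ≠ x})
  have hxX : x ∉ Subtype.val '' X := fun ⟨w, _, hw⟩ => w.2 hw
  rw [← hcard, ← Set.ncard_image_of_injective X Subtype.val_injective]
  refine ncard_le_two_mul_mu hG hxX ?_
  rintro _ ⟨u, hu, rfl⟩ _ ⟨v, hv, rfl⟩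
  exact (hX u hu v hv).image_or_dist_add_dist_eq

theorem stmt_9 {V : Type*} [Fintype V] (G : SimpleGraph V) (hG : G.Connected)
    (x : V) (hconn : (G.induce {v | v ≠ x}).Connected) :
    mu (G.induce {v | v ≠ x}) ≤ 2 * mu G :=
  stmt_9_general G hG x
end

section
/- If G is a connected graph with diameter 2 and x ∈ V(G) is such that G−x is connected, then μ(G−x) ≤ μ(G), where μ is the mutual-visibility number. -/
open SimpleGraph

/-! Let `X` be a mutual-visibility set of `G[S]`. If two vertices of `X` are at the same distance
in `G[S]` and in `G`, a shortest path of `G[S]` still witnesses their visibility in `G`. Otherwise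
their distance in `G` is at most two, and neither `0` nor `1` since these are the same in `G[S]`;
so it is two, and every common neighbour lies outside `S`, hence outside `X`: the path through it
witnesses visibility. So `X` stays a
mutual-visibility set of `G`, and `μ(G[S]) ≤ μ(G)`. -/

section

variable {V W : Type*} {G : SimpleGraph V}

lemma isMVisible_of_adj_of_adj {X : Set V} {u v w : V} (huw : G.Adj u w) (hwv : G.Adj w v)
    (hdist : G.dist u v = 2) (hw : w ∉ X) : IsMVisible G X u v := by
  refine ⟨.cons huw (.cons hwv .nil), by simp [hdist], ?_⟩
  intro z hz hzX
  simp only [Walk.support_cons, Walk.support_nil, List.mem_cons, List.not_mem_nil,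
    or_false] at hz
  rcases hz with rfl | rfl | rfl
  · exact .inl rfl
  · exact absurd hzX hw
  · exact .inr rfl

lemma IsMVisible.map {G' : SimpleGraph W} (f : G' ↪g G) {X : Set W} {a b : W}
    (h : IsMVisible G' X a b) (hdist : G.dist (f a) (f b) = G'.dist a b) :
    IsMVisible G (f '' X) (f a) (f b) := by
  obtain ⟨P, hPlen, hPX⟩ := h
  refine ⟨P.map f.toHom, by rw [Walk.length_map, hPlen, hdist], ?_⟩
  rintro _ hw ⟨d, hdX, rfl⟩
  rw [Walk.support_map, List.mem_map] at hw
  obtain ⟨c, hc, hcd⟩ := hw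
  obtain rfl : c = d := f.injective hcd
  rcases hPX c hc hdX with rfl | rfl
  · exact .inl rfl
  · exact .inr rfl

lemma SimpleGraph.exists_adj_adj_notMem_of_dist_lt_dist_induce {S : Set V} {a b : S}
    (h2 : G.edist a b ≤ 2) (hlt : G.dist a b < (G.induce S).dist a b) :
    G.dist a b = 2 ∧ ∃ w ∉ S, G.Adj a w ∧ G.Adj w b := by
  have hab : (a : V) ≠ b := by
    rintro hab
    cases Subtype.val_injective hab
    simp at hlt
  have hnadj : ¬ G.Adj a b := by
    intro hadj
    have hadj' : (G.induce S).Adj a b := hadj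
    rw [dist_eq_one_iff_adj.mpr hadj, dist_eq_one_iff_adj.mpr hadj'] at hlt
    exact lt_irrefl _ hlt
  have hedist : G.edist a b = 2 := by
    have h0 : G.edist a b ≠ 0 := edist_eq_zero_iff.not.mpr hab
    have h1 : G.edist a b ≠ 1 := edist_eq_one_iff_adj.not.mpr hnadj
    generalize G.edist a b = e at h0 h1 h2 ⊢
    match e, h2 with
    | 0, _ => exact absurd rfl h0
    | 1, _ => exact absurd rfl h1
    | 2, _ => rfl
  have hdist : G.dist a b = 2 := by simp [dist, hedist]
  obtain ⟨w, hw⟩ := (edist_eq_two_iff.mp hedist).2.2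
  rw [mem_commonNeighbors] at hw
  refine ⟨hdist, w, fun hwS => ?_, hw.1, hw.2.symm⟩
  have haw : (G.induce S).Adj a ⟨w, hwS⟩ := hw.1
  have hwb : (G.induce S).Adj ⟨w, hwS⟩ b := hw.2.symm
  have := dist_le (Walk.cons haw (Walk.cons hwb .nil))
  simp only [Walk.length_cons, Walk.length_nil] at this
  omega

lemma IsMVSet.image_val_of_ediam_le_two (hdiam : G.ediam ≤ 2) {S : Set V} {X : Set S}
    (hX : IsMVSet (G.induce S) X) : IsMVSet G (Subtype.val '' X) := by
  rintro _ ⟨a, ha, rfl⟩ _ ⟨b, hb, rfl⟩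
  have hvis := hX a ha b hb
  have hle : G.dist a b ≤ (G.induce S).dist a b := by
    obtain ⟨P, hPlen, -⟩ := hvis
    exact hPlen ▸ (dist_le (P.map (Embedding.induce S).toHom)).trans_eq (Walk.length_map _ _)
  rcases hle.eq_or_lt with heq | hlt
  · exact hvis.map (Embedding.induce S) heq
  · obtain ⟨hdist, w, hwS, haw, hwb⟩ :=
      exists_adj_adj_notMem_of_dist_lt_dist_induce (edist_le_ediam.trans hdiam) hlt
    refine isMVisible_of_adj_of_adj haw hwb hdist ?_
    rintro ⟨c, -, rfl⟩
    exact hwS c.2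

lemma mu_le_mu_of_embedding [Finite V] {G' : SimpleGraph W} (f : W ↪ V)
    (h : ∀ X, IsMVSet G' X → IsMVSet G (f '' X)) : mu G' ≤ mu G := by
  have hbdd : BddAbove {n | ∃ X : Set V, IsMVSet G X ∧ X.ncard = n} :=
    ⟨Nat.card V, by rintro _ ⟨X, -, rfl⟩; exact Set.ncard_le_card X⟩
  have hne : {n | ∃ X : Set W, IsMVSet G' X ∧ X.ncard = n}.Nonempty :=
    ⟨0, ∅, by simp [IsMVSet], Set.ncard_empty _⟩
  refine csSup_le_csSup hbdd hne ?_
  rintro _ ⟨X, hX, rfl⟩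
  exact ⟨f '' X, h X hX, Set.ncard_image_of_injective X f.injective⟩

end

theorem stmt_10_general {V : Type*} [Fintype V] (G : SimpleGraph V)
    (hdiam : G.diam = 2)
    (x : V) :
    mu (G.induce {v | v ≠ x}) ≤ mu G := by
  have hediam : G.ediam ≤ 2 := by
    have hne : G.ediam ≠ ⊤ := ediam_ne_top_of_diam_ne_zero (by omega)
    rw [← ENat.natCast_toNat hne, ← diam, hdiam]
    rfl
  exact mu_le_mu_of_embedding (Function.Embedding.subtype _)
    fun _ hX => hX.image_val_of_ediam_le_two hediam

theorem stmt_10 {V : Type*} [Fintype V] (G : SimpleGraph V) (hG : G.Connected)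
    (hdiam : G.diam = 2)
    (x : V) (hconn : (G.induce {v | v ≠ x}).Connected) :
    mu (G.induce {v | v ≠ x}) ≤ mu G :=
  stmt_10_general G hdiam x
end

section
/- For every integer k ≥ 2, let H_k be the graph with vertex set {z,w} ∪ {x_i, y_i : i ∈ [k]} where x_i y_i z w x_i is a 4-cycle for each i, and let e = zw. Then μ(H_k − e) = k+1 and μ_o(H_k − e) = k. -/
open SimpleGraph

/-- relation underlying the graph `H_k`; with `z = Sum.inl true`, `w = Sum.inl false`,
`x i = Sum.inr (i, false)`, `y i = Sum.inr (i, true)`, the edges are exactly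
`z w`, `w x_i`, `x_i y_i`, `y_i z`, i.e. each `x_i y_i z w x_i` is a 4-cycle. -/
def Hrel (k : ℕ) : (Bool ⊕ Fin k × Bool) → (Bool ⊕ Fin k × Bool) → Prop
  | Sum.inl a, Sum.inl b => a ≠ b
  | Sum.inl a, Sum.inr p => a = p.2
  | Sum.inr p, Sum.inl a => a = p.2
  | Sum.inr p, Sum.inr q => p.1 = q.1 ∧ p.2 ≠ q.2

/-- the graph `H_k` from the paper -/
def Hgraph (k : ℕ) : SimpleGraph (Bool ⊕ Fin k × Bool) := SimpleGraph.fromRel (Hrel k)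

namespace Aux
variable {k : ℕ}

abbrev VV (k : ℕ) := Bool ⊕ Fin k × Bool
def z : VV k := Sum.inl true
def w : VV k := Sum.inl false
def x (i : Fin k) : VV k := Sum.inr (i, false)
def y (i : Fin k) : VV k := Sum.inr (i, true)

def GG (k : ℕ) : SimpleGraph (VV k) :=
  (Hgraph k).deleteEdges {s((Sum.inl true : VV k), Sum.inl false)}

lemma adj_z {v : VV k} : (GG k).Adj z v ↔ ∃ i, v = y i := by
  rcases v with a | ⟨i, b⟩
  · constructor
    · rintro ⟨h1, h2⟩
      exfalso
      rcases a with _ | _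
      · exact h2 (by simp [z, Sym2.eq_iff])
      · simp [Hgraph, z, fromRel_adj] at h1
    · rintro ⟨i, hi⟩; simp [y] at hi
  · constructor
    · rintro ⟨h1, -⟩
      simp only [Hgraph, fromRel_adj, z] at h1
      rcases h1 with ⟨-, h | h⟩ <;> simp [Hrel] at h <;>
        cases b <;> first | exact ⟨i, rfl⟩ | simp at h
    · rintro ⟨j, hj⟩
      cases hj
      refine ⟨?_, by simp [z, w, y, Sym2.eq_iff]⟩
      simp [Hgraph, fromRel_adj, z, y, Hrel]

lemma adj_w {v : VV k} : (GG k).Adj w v ↔ ∃ i, v = x i := by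
  rcases v with a | ⟨i, b⟩
  · constructor
    · rintro ⟨h1, h2⟩
      exfalso
      rcases a with _ | _
      · simp [Hgraph, w, fromRel_adj] at h1
      · exact h2 (by simp [w, Sym2.eq_iff])
    · rintro ⟨i, hi⟩; simp [x] at hi
  · constructor
    · rintro ⟨h1, -⟩
      simp only [Hgraph, fromRel_adj, w] at h1
      rcases h1 with ⟨-, h | h⟩ <;> simp [Hrel] at h <;>
        cases b <;> first | exact ⟨i, rfl⟩ | simp at h
    · rintro ⟨j, hj⟩
      cases hj
      refine ⟨?_, by simp [z, w, x, Sym2.eq_iff]⟩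
      simp [Hgraph, fromRel_adj, w, x, Hrel]


lemma adj_x {i : Fin k} {v : VV k} : (GG k).Adj (x i) v ↔ v = w ∨ v = y i := by
  rcases v with a | ⟨j, b⟩
  · constructor
    · rintro ⟨h1, -⟩
      simp only [Hgraph, fromRel_adj, x] at h1
      rcases h1 with ⟨-, h | h⟩ <;> simp [Hrel] at h <;>
        cases a <;> first | (left; rfl) | simp at h
    · rintro (h | h)
      · cases h
        refine ⟨?_, by simp [z, w, x, Sym2.eq_iff]⟩
        simp [Hgraph, fromRel_adj, w, x, Hrel]
      · simp [y] at h
  · constructor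
    · rintro ⟨h1, -⟩
      simp only [Hgraph, fromRel_adj, x] at h1
      rcases h1 with ⟨hne, h | h⟩ <;> simp [Hrel] at h
      · obtain ⟨h1, h2⟩ := h
        cases b
        · simp at h2
        · right; rw [h1]; rfl
      · obtain ⟨h1, h2⟩ := h
        cases b
        · simp at h2
        · right; rw [← h1]; rfl
    · rintro (h | h)
      · simp [w] at h
      · cases h
        refine ⟨?_, by simp [z, w, x, y, Sym2.eq_iff]⟩
        simp [Hgraph, fromRel_adj, x, y, Hrel]

lemma adj_y {i : Fin k} {v : VV k} : (GG k).Adj (y i) v ↔ v = z ∨ v = x i := by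
  rcases v with a | ⟨j, b⟩
  · constructor
    · rintro ⟨h1, -⟩
      simp only [Hgraph, fromRel_adj, y] at h1
      rcases h1 with ⟨-, h | h⟩ <;> simp [Hrel] at h <;>
        cases a <;> first | (left; rfl) | simp at h
    · rintro (h | h)
      · cases h
        refine ⟨?_, by simp [z, w, y, Sym2.eq_iff]⟩
        simp [Hgraph, fromRel_adj, z, y, Hrel]
      · simp [x] at h
  · constructor
    · rintro ⟨h1, -⟩
      simp only [Hgraph, fromRel_adj, y] at h1
      rcases h1 with ⟨hne, h | h⟩ <;> simp [Hrel] at h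
      · obtain ⟨h1, h2⟩ := h
        cases b
        · right; rw [h1]; rfl
        · simp at h2
      · obtain ⟨h1, h2⟩ := h
        cases b
        · right; rw [← h1]; rfl
        · simp at h2
    · rintro (h | h)
      · simp [z] at h
      · cases h
        refine ⟨?_, by simp [z, w, x, y, Sym2.eq_iff]⟩
        simp [Hgraph, fromRel_adj, x, y, Hrel]


-- basic adjacency facts
lemma axw {i : Fin k} : (GG k).Adj (x i) w := adj_x.mpr (Or.inl rfl)
lemma axy {i : Fin k} : (GG k).Adj (x i) (y i) := adj_x.mpr (Or.inr rfl)
lemma ayz {i : Fin k} : (GG k).Adj (y i) z := adj_y.mpr (Or.inl rfl)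

-- walk decomposition
lemma walk_len2 {V : Type*} {G : SimpleGraph V} {u v : V} (p : G.Walk u v)
    (h : p.length = 2) : ∃ m, G.Adj u m ∧ G.Adj m v ∧ p.support = [u, m, v] := by
  cases p with
  | nil => simp at h
  | cons h1 q =>
    cases q with
    | nil => simp at h
    | cons h2 r =>
      cases r with
      | nil => exact ⟨_, h1, h2, by simp⟩
      | cons h3 s => simp at h

lemma walk_len3 {V : Type*} {G : SimpleGraph V} {u v : V} (p : G.Walk u v)
    (h : p.length = 3) :
    ∃ a b, G.Adj u a ∧ G.Adj a b ∧ G.Adj b v ∧ p.support = [u, a, b, v] := by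
  cases p with
  | nil => simp at h
  | cons h1 q =>
    cases q with
    | nil => simp at h
    | cons h2 r =>
      cases r with
      | nil => simp at h
      | cons h3 s =>
        cases s with
        | nil => exact ⟨_, _, h1, h2, h3, by simp⟩
        | cons h4 t => simp at h

-- distances
lemma dist_xx {i j : Fin k} (hij : i ≠ j) : (GG k).dist (x i) (x j) = 2 := by
  have hle : (GG k).dist (x i) (x j) ≤ 2 := by
    have := SimpleGraph.dist_le
      (Walk.cons axw (Walk.cons (adj_w.mpr ⟨j, rfl⟩) Walk.nil) : (GG k).Walk (x i) (x j))
    simpa using this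
  have h0 : (GG k).dist (x i) (x j) ≠ 0 := by
    rw [SimpleGraph.dist_ne_zero_iff_ne_and_reachable]
    exact ⟨by simp [x, hij], ⟨Walk.cons axw (Walk.cons (adj_w.mpr ⟨j, rfl⟩) Walk.nil)⟩⟩
  have h1 : (GG k).dist (x i) (x j) ≠ 1 := by
    intro hd
    rw [SimpleGraph.dist_eq_one_iff_adj] at hd
    rw [adj_x] at hd
    revert hd
    rintro (h | h) <;> simp [w, y, x, hij] at h
  omega

lemma dist_yy {i j : Fin k} (hij : i ≠ j) : (GG k).dist (y i) (y j) = 2 := by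
  have hle : (GG k).dist (y i) (y j) ≤ 2 := by
    have := SimpleGraph.dist_le
      (Walk.cons ayz (Walk.cons (adj_z.mpr ⟨j, rfl⟩) Walk.nil) : (GG k).Walk (y i) (y j))
    simpa using this
  have h0 : (GG k).dist (y i) (y j) ≠ 0 := by
    rw [SimpleGraph.dist_ne_zero_iff_ne_and_reachable]
    exact ⟨by simp [y, hij], ⟨Walk.cons ayz (Walk.cons (adj_z.mpr ⟨j, rfl⟩) Walk.nil)⟩⟩
  have h1 : (GG k).dist (y i) (y j) ≠ 1 := by
    intro hd
    rw [SimpleGraph.dist_eq_one_iff_adj] at hd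
    rw [adj_y] at hd
    revert hd
    rintro (h | h) <;> simp [z, x, y, hij] at h
  omega

lemma dist_zx {i : Fin k} : (GG k).dist z (x i) = 2 := by
  have hle : (GG k).dist z (x i) ≤ 2 := by
    have := SimpleGraph.dist_le
      (Walk.cons (adj_z.mpr ⟨i, rfl⟩) (Walk.cons axy.symm Walk.nil) : (GG k).Walk z (x i))
    simpa using this
  have h0 : (GG k).dist z (x i) ≠ 0 := by
    rw [SimpleGraph.dist_ne_zero_iff_ne_and_reachable]
    exact ⟨by simp [z, x], ⟨Walk.cons (adj_z.mpr ⟨i, rfl⟩) (Walk.cons axy.symm Walk.nil)⟩⟩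
  have h1 : (GG k).dist z (x i) ≠ 1 := by
    intro hd
    rw [SimpleGraph.dist_eq_one_iff_adj] at hd
    rw [adj_z] at hd
    revert hd
    rintro ⟨j, h⟩; simp [x, y] at h
  omega

lemma dist_wy {i : Fin k} : (GG k).dist w (y i) = 2 := by
  have hle : (GG k).dist w (y i) ≤ 2 := by
    have := SimpleGraph.dist_le
      (Walk.cons (adj_w.mpr ⟨i, rfl⟩) (Walk.cons axy Walk.nil) : (GG k).Walk w (y i))
    simpa using this
  have h0 : (GG k).dist w (y i) ≠ 0 := by
    rw [SimpleGraph.dist_ne_zero_iff_ne_and_reachable]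
    exact ⟨by simp [w, y], ⟨Walk.cons (adj_w.mpr ⟨i, rfl⟩) (Walk.cons axy Walk.nil)⟩⟩
  have h1 : (GG k).dist w (y i) ≠ 1 := by
    intro hd
    rw [SimpleGraph.dist_eq_one_iff_adj] at hd
    rw [adj_w] at hd
    revert hd
    rintro ⟨j, h⟩; simp [x, y] at h
  omega

lemma dist_xy {i j : Fin k} (hij : i ≠ j) : (GG k).dist (x i) (y j) = 3 := by
  have hle : (GG k).dist (x i) (y j) ≤ 3 := by
    have := SimpleGraph.dist_le
      ((Walk.cons axy (Walk.cons ayz (Walk.cons (adj_z.mpr ⟨j, rfl⟩) Walk.nil)))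
        : (GG k).Walk (x i) (y j))
    simpa using this
  have h0 : (GG k).dist (x i) (y j) ≠ 0 := by
    rw [SimpleGraph.dist_ne_zero_iff_ne_and_reachable]
    exact ⟨by simp [x, y], ⟨Walk.cons axy (Walk.cons ayz (Walk.cons (adj_z.mpr ⟨j, rfl⟩) Walk.nil))⟩⟩
  have h1 : (GG k).dist (x i) (y j) ≠ 1 := by
    intro hd
    rw [SimpleGraph.dist_eq_one_iff_adj] at hd
    rw [adj_x] at hd
    revert hd
    rintro (h | h)
    · simp [w, y] at h
    · simp [y] at h; exact hij h.symm
  have h2 : (GG k).dist (x i) (y j) ≠ 2 := by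
    intro hd
    obtain ⟨p, hp⟩ := SimpleGraph.exists_walk_of_dist_ne_zero h0
    rw [hd] at hp
    obtain ⟨m, hm1, hm2, -⟩ := walk_len2 p hp
    rw [adj_x] at hm1
    rcases hm1 with rfl | rfl
    · rw [adj_w] at hm2; obtain ⟨l, hl⟩ := hm2; simp [x, y] at hl
    · rw [adj_y] at hm2; rcases hm2 with h | h <;> simp [z, x, y, hij] at h
  omega

lemma dist_zw : 0 < k → (GG k).dist z w = 3 := by
  intro hk0
  let i : Fin k := ⟨0, hk0⟩
  let hr : (GG k).Walk z w :=
    Walk.cons (adj_z.mpr ⟨i, rfl⟩) (Walk.cons (adj_y.mpr (Or.inr rfl)) (Walk.cons axw Walk.nil))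
  have hle : (GG k).dist z w ≤ 3 := by
    have := SimpleGraph.dist_le hr; simpa [hr] using this
  have h0 : (GG k).dist z w ≠ 0 := by
    rw [SimpleGraph.dist_ne_zero_iff_ne_and_reachable]
    exact ⟨by simp [z, w], ⟨hr⟩⟩
  have h1 : (GG k).dist z w ≠ 1 := by
    intro hd
    rw [SimpleGraph.dist_eq_one_iff_adj] at hd
    rw [adj_z] at hd
    revert hd
    rintro ⟨j, h⟩; simp [w, y] at h
  have h2 : (GG k).dist z w ≠ 2 := by
    intro hd
    obtain ⟨p, hp⟩ := SimpleGraph.exists_walk_of_dist_ne_zero h0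
    rw [hd] at hp
    obtain ⟨m, hm1, hm2, -⟩ := walk_len2 p hp
    rw [adj_z] at hm1
    obtain ⟨l, rfl⟩ := hm1
    rw [adj_y] at hm2
    rcases hm2 with h | h <;> simp [z, w, x] at h
  omega


lemma IsMVisible.symm' {V : Type*} {G : SimpleGraph V} {X : Set V} {u v : V}
    (h : IsMVisible G X u v) : IsMVisible G X v u := by
  obtain ⟨P, h1, h2⟩ := h
  refine ⟨P.reverse, by simp [h1, SimpleGraph.dist_comm], ?_⟩
  intro a ha haX
  rcases h2 a (by simpa using ha) haX with h | h
  · exact Or.inr h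
  · exact Or.inl h

lemma IsMVisible.refl' {V : Type*} {G : SimpleGraph V} {X : Set V} (u : V) :
    IsMVisible G X u u :=
  ⟨Walk.nil, by simp [SimpleGraph.dist_self], by simp⟩

lemma vis_xx {i j : Fin k} {X : Set (VV k)} (hij : i ≠ j)
    (h : IsMVisible (GG k) X (x i) (x j)) : w ∉ X := by
  obtain ⟨P, hlen, hsup⟩ := h
  rw [dist_xx hij] at hlen
  obtain ⟨m, hm1, hm2, hs⟩ := walk_len2 P hlen
  rw [adj_x] at hm1
  rcases hm1 with rfl | rfl
  · intro hwX
    rcases hsup w (by rw [hs]; simp) hwX with h | h <;> simp [w, x] at h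
  · rw [adj_y] at hm2
    rcases hm2 with h | h
    · simp [z, x] at h
    · simp [x] at h
      exact (hij h.symm).elim

lemma vis_yy {i j : Fin k} {X : Set (VV k)} (hij : i ≠ j)
    (h : IsMVisible (GG k) X (y i) (y j)) : z ∉ X := by
  obtain ⟨P, hlen, hsup⟩ := h
  rw [dist_yy hij] at hlen
  obtain ⟨m, hm1, hm2, hs⟩ := walk_len2 P hlen
  rw [adj_y] at hm1
  rcases hm1 with rfl | rfl
  · intro hzX
    rcases hsup z (by rw [hs]; simp) hzX with h | h <;> simp [z, y] at h
  · rw [adj_x] at hm2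
    rcases hm2 with h | h
    · simp [w, y] at h
    · simp [y] at h
      exact (hij h.symm).elim

lemma vis_zx {i : Fin k} {X : Set (VV k)}
    (h : IsMVisible (GG k) X z (x i)) : y i ∉ X := by
  obtain ⟨P, hlen, hsup⟩ := h
  rw [dist_zx] at hlen
  obtain ⟨m, hm1, hm2, hs⟩ := walk_len2 P hlen
  rw [adj_z] at hm1
  obtain ⟨l, rfl⟩ := hm1
  rw [adj_y] at hm2
  rcases hm2 with h | h
  · simp [z, x] at h
  · have : l = i := by simpa [x] using h.symm
    subst this
    intro hyX
    rcases hsup (y l) (by rw [hs]; simp) hyX with h | h <;> simp [z, x, y] at h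

lemma vis_wy {i : Fin k} {X : Set (VV k)}
    (h : IsMVisible (GG k) X w (y i)) : x i ∉ X := by
  obtain ⟨P, hlen, hsup⟩ := h
  rw [dist_wy] at hlen
  obtain ⟨m, hm1, hm2, hs⟩ := walk_len2 P hlen
  rw [adj_w] at hm1
  obtain ⟨l, rfl⟩ := hm1
  rw [adj_x] at hm2
  rcases hm2 with h | h
  · simp [w, y] at h
  · have : l = i := by simpa [y] using h.symm
    subst this
    intro hxX
    rcases hsup (x l) (by rw [hs]; simp) hxX with h | h <;> simp [w, x, y] at h

lemma vis_xy {i j : Fin k} {X : Set (VV k)} (hij : i ≠ j)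
    (h : IsMVisible (GG k) X (x i) (y j)) :
    (w ∉ X ∧ x j ∉ X) ∨ (y i ∉ X ∧ z ∉ X) := by
  obtain ⟨P, hlen, hsup⟩ := h
  rw [dist_xy hij] at hlen
  obtain ⟨a, b, ha, hab, hb, hs⟩ := walk_len3 P hlen
  rw [adj_x] at ha
  rcases ha with rfl | rfl
  · rw [adj_w] at hab
    obtain ⟨l, rfl⟩ := hab
    rw [adj_x] at hb
    rcases hb with h | h
    · simp [w, y] at h
    · have : l = j := by simpa [y] using h.symm
      subst this
      left
      constructor
      · intro hX
        rcases hsup w (by rw [hs]; simp) hX with h | h <;> simp [w, x, y] at h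
      · intro hX
        rcases hsup (x l) (by rw [hs]; simp) hX with h | h
        · simp [x] at h; exact hij h.symm
        · simp [x, y] at h
  · rw [adj_y] at hab
    rcases hab with rfl | rfl
    · rw [adj_z] at hb
      obtain ⟨l, hl⟩ := hb
      have : l = j := by simpa [y] using hl.symm
      subst this
      right
      constructor
      · intro hX
        rcases hsup (y i) (by rw [hs]; simp) hX with h | h
        · simp [x, y] at h
        · simp [y] at h; exact hij h
      · intro hX
        rcases hsup z (by rw [hs]; simp) hX with h | h <;> simp [z, x, y] at h
    · rw [adj_x] at hb
      rcases hb with h | h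
      · simp [w, y] at h
      · simp [y] at h; exact absurd h.symm hij

lemma vis_zw {X : Set (VV k)} (hk0 : 0 < k)
    (h : IsMVisible (GG k) X z w) : ∃ i, y i ∉ X ∧ x i ∉ X := by
  obtain ⟨P, hlen, hsup⟩ := h
  rw [dist_zw hk0] at hlen
  obtain ⟨a, b, ha, hab, hb, hs⟩ := walk_len3 P hlen
  rw [adj_z] at ha
  obtain ⟨l, rfl⟩ := ha
  rw [adj_y] at hab
  rcases hab with rfl | rfl
  · rw [adj_z] at hb
    obtain ⟨m, hm⟩ := hb
    simp [w, y] at hm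
  · refine ⟨l, ?_, ?_⟩
    · intro hX
      rcases hsup (y l) (by rw [hs]; simp) hX with h | h <;> simp [z, w, y] at h
    · intro hX
      rcases hsup (x l) (by rw [hs]; simp) hX with h | h <;> simp [z, w, x] at h


-- counting infrastructure
def proj : VV k → Bool ⊕ Fin k := Sum.map id Prod.fst

lemma injOn_proj {Y : Set (VV k)} (hfull : ∀ i, x i ∈ Y → y i ∈ Y → False) :
    Set.InjOn proj Y := by
  rintro (a | ⟨i, b⟩) hu (c | ⟨j, d⟩) hv h
  · simp only [proj, Sum.map_inl, Sum.inl.injEq, id] at h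
    rw [h]
  · simp [proj] at h
  · simp [proj] at h
  · simp only [proj, Sum.map_inr, Sum.inr.injEq] at h
    subst h
    cases b <;> cases d
    · rfl
    · exact (hfull i hu hv).elim
    · exact (hfull i hv hu).elim
    · rfl

lemma ncard_le_of_proj {Y : Set (VV k)} (hfull : ∀ i, x i ∈ Y → y i ∈ Y → False)
    {T : Set (Bool ⊕ Fin k)} (hT : ∀ v ∈ Y, proj v ∈ T) : Y.ncard ≤ T.ncard := by
  rw [← Set.ncard_image_of_injOn (injOn_proj hfull)]
  exact Set.ncard_le_ncard (Set.image_subset_iff.mpr hT) (Set.toFinite T)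

lemma ncard_univ_bf : (Set.univ : Set (Bool ⊕ Fin k)).ncard = k + 2 := by
  rw [Set.ncard_univ, Nat.card_eq_fintype_card]
  simp
  omega

lemma ncard_diff1 (a : Bool ⊕ Fin k) :
    ((Set.univ : Set (Bool ⊕ Fin k)) \ {a}).ncard = k + 1 := by
  rw [Set.ncard_diff_singleton_of_mem (Set.mem_univ a), ncard_univ_bf]
  omega

lemma ncard_diff2 (a b : Bool ⊕ Fin k) (hab : a ≠ b) :
    (((Set.univ : Set (Bool ⊕ Fin k)) \ {a}) \ {b}).ncard = k := by
  rw [Set.ncard_diff_singleton_of_mem (by simp [hab.symm] : b ∈ Set.univ \ {a}),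
    ncard_diff1]
  omega

lemma ncard_le_diff_add {Y : Set (VV k)} (a : VV k) :
    Y.ncard ≤ (Y \ {a}).ncard + 1 := by
  calc Y.ncard ≤ (insert a (Y \ {a})).ncard := by
        refine Set.ncard_le_ncard ?_ (Set.toFinite _)
        rw [Set.insert_diff_singleton]
        exact Set.subset_insert _ _
    _ ≤ (Y \ {a}).ncard + 1 := Set.ncard_insert_le _ _

lemma nofull_bound {X : Set (VV k)}
    (hsub : ∀ i j : Fin k, (x i ∈ X ∧ y i ∈ X) → (x j ∈ X ∧ y j ∈ X) → i = j)
    (hz : z ∉ X) (hw : w ∉ X) : X.ncard ≤ k + 1 := by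
  have hT : ∀ (Y : Set (VV k)), Y ⊆ X → ∀ v ∈ Y,
      proj v ∈ ((Set.univ \ {Sum.inl true}) \ {Sum.inl false} : Set (Bool ⊕ Fin k)) := by
    rintro Y hYX (a | ⟨i, b⟩) hv
    · cases a
      · exact (hw (hYX hv)).elim
      · exact (hz (hYX hv)).elim
    · simp [proj]
  by_cases hex : ∃ i, x i ∈ X ∧ y i ∈ X
  · obtain ⟨i0, hx0, hy0⟩ := hex
    have hnf : ∀ i, x i ∈ X \ {y i0} → y i ∈ X \ {y i0} → False := by
      intro i hxi hyi
      rcases eq_or_ne i i0 with rfl | hne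
      · exact hyi.2 rfl
      · exact hne (hsub i i0 ⟨hxi.1, hyi.1⟩ ⟨hx0, hy0⟩)
    have h1 : (X \ {y i0}).ncard ≤ k := by
      have := ncard_le_of_proj hnf (hT (X \ {y i0}) Set.diff_subset)
      rwa [ncard_diff2 _ _ (by simp)] at this
    have := ncard_le_diff_add (Y := X) (y i0)
    omega
  · push_neg at hex
    have hnf : ∀ i, x i ∈ X → y i ∈ X → False := fun i h1 h2 => hex i h1 h2
    have := ncard_le_of_proj hnf (hT X le_rfl)
    rw [ncard_diff2 _ _ (by simp)] at this
    omega

lemma mv_card_le {X : Set (VV k)} (hk0 : 0 < k) (hX : IsMVSet (GG k) X) :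
    X.ncard ≤ k + 1 := by
  by_cases hz : z ∈ X
  · have hnf : ∀ i : Fin k, x i ∈ X → y i ∈ X → False := fun i hxi hyi =>
      vis_zx (hX z hz (x i) hxi) hyi
    by_cases hw : w ∈ X
    · obtain ⟨i0, hy0, hx0⟩ := vis_zw hk0 (hX z hz w hw)
      have hT : ∀ v ∈ X, proj v ∈ (Set.univ \ {Sum.inr i0} : Set (Bool ⊕ Fin k)) := by
        rintro (a | ⟨i, b⟩) hv
        · simp [proj]
        · simp only [proj, Sum.map_inr, Set.mem_diff, Set.mem_univ, true_and,
            Set.mem_singleton_iff, Sum.inr.injEq]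
          rintro rfl
          cases b
          · exact hx0 hv
          · exact hy0 hv
      have := ncard_le_of_proj hnf hT
      rwa [ncard_diff1] at this
    · have hT : ∀ v ∈ X, proj v ∈ (Set.univ \ {Sum.inl false} : Set (Bool ⊕ Fin k)) := by
        rintro (a | ⟨i, b⟩) hv
        · cases a
          · exact (hw hv).elim
          · simp [proj]
        · simp [proj]
      have := ncard_le_of_proj hnf hT
      rwa [ncard_diff1] at this
  · by_cases hw : w ∈ X
    · have hnf : ∀ i : Fin k, x i ∈ X → y i ∈ X → False := fun i hxi hyi =>
        vis_wy (hX w hw (y i) hyi) hxi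
      have hT : ∀ v ∈ X, proj v ∈ (Set.univ \ {Sum.inl true} : Set (Bool ⊕ Fin k)) := by
        rintro (a | ⟨i, b⟩) hv
        · cases a
          · simp [proj]
          · exact (hz hv).elim
        · simp [proj]
      have := ncard_le_of_proj hnf hT
      rwa [ncard_diff1] at this
    · refine nofull_bound ?_ hz hw
      intro i j hi hj
      by_contra hij
      rcases vis_xy hij (hX (x i) hi.1 (y j) hj.2) with ⟨-, h⟩ | ⟨h, -⟩
      · exact h hj.1
      · exact h hi.2


lemma outer_card_le {X : Set (VV k)} (hk : 2 ≤ k) (hX : IsOuterMVSet (GG k) X) :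
    X.ncard ≤ k := by
  have hk0 : 0 < k := by omega
  let i0 : Fin k := ⟨0, by omega⟩
  let i1 : Fin k := ⟨1, by omega⟩
  have h01 : i0 ≠ i1 := by simp [i0, i1, Fin.ext_iff]
  by_cases hz : z ∈ X
  · have hy : ∀ i : Fin k, y i ∉ X := fun i => vis_zx (hX z hz (x i))
    by_cases hw : w ∈ X
    · -- X ⊆ {z, w}
      have hx : ∀ i : Fin k, x i ∉ X := fun i => vis_wy (hX w hw (y i))
      have hsub : X ⊆ {z, w} := by
        rintro (a | ⟨i, b⟩) hv
        · cases a
          · exact Or.inr rfl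
          · exact Or.inl rfl
        · cases b
          · exact (hx i hv).elim
          · exact (hy i hv).elim
      calc X.ncard ≤ ({z, w} : Set (VV k)).ncard :=
            Set.ncard_le_ncard hsub (Set.toFinite _)
        _ = 2 := Set.ncard_pair (by simp [z, w])
        _ ≤ k := hk
    · -- z ∈ X, w ∉ X
      have hex : ∃ i : Fin k, x i ∉ X := by
        by_contra hall
        push_neg at hall
        rcases vis_xy h01 (hX (x i0) (hall i0) (y i1)) with ⟨-, h⟩ | ⟨-, h⟩
        · exact h (hall i1)
        · exact h hz
      obtain ⟨j0, hxj0⟩ := hex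
      have hnf : ∀ i, x i ∈ X → y i ∈ X → False := fun i _ h2 => hy i h2
      have hT : ∀ v ∈ X, proj v ∈
          (((Set.univ : Set (Bool ⊕ Fin k)) \ {Sum.inl false}) \ {Sum.inr j0}) := by
        rintro (a | ⟨i, b⟩) hv
        · cases a
          · exact (hw hv).elim
          · simp [proj]
        · simp only [proj, Sum.map_inr, Set.mem_diff, Set.mem_univ, true_and,
            Set.mem_singleton_iff]
          refine ⟨by simp, ?_⟩
          rintro h
          rw [Sum.inr.injEq] at h
          subst h
          cases b
          · exact hxj0 hv
          · exact hy i hv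
      have := ncard_le_of_proj hnf hT
      rwa [ncard_diff2 _ _ (by simp)] at this
  · by_cases hw : w ∈ X
    · -- w ∈ X, z ∉ X
      have hx : ∀ i : Fin k, x i ∉ X := fun i => vis_wy (hX w hw (y i))
      have hex : ∃ i : Fin k, y i ∉ X := by
        by_contra hall
        push_neg at hall
        rcases vis_xy (Ne.symm h01) (IsMVisible.symm' (hX (y i0) (hall i0) (x i1)))
          with ⟨h, -⟩ | ⟨h, -⟩
        · exact h hw
        · exact h (hall i1)
      obtain ⟨j0, hyj0⟩ := hex
      have hnf : ∀ i, x i ∈ X → y i ∈ X → False := fun i h1 _ => hx i h1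
      have hT : ∀ v ∈ X, proj v ∈
          (((Set.univ : Set (Bool ⊕ Fin k)) \ {Sum.inl true}) \ {Sum.inr j0}) := by
        rintro (a | ⟨i, b⟩) hv
        · cases a
          · simp [proj]
          · exact (hz hv).elim
        · simp only [proj, Sum.map_inr, Set.mem_diff, Set.mem_univ, true_and,
            Set.mem_singleton_iff]
          refine ⟨by simp, ?_⟩
          rintro h
          rw [Sum.inr.injEq] at h
          subst h
          cases b
          · exact hx i hv
          · exact hyj0 hv
      have := ncard_le_of_proj hnf hT
      rwa [ncard_diff2 _ _ (by simp)] at this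
    · -- z ∉ X, w ∉ X
      by_cases hex : ∃ i, x i ∈ X ∧ y i ∈ X
      · obtain ⟨j0, hx0, hy0⟩ := hex
        have hsub : X ⊆ {x j0, y j0} := by
          rintro (a | ⟨i, b⟩) hv
          · cases a
            · exact (hw hv).elim
            · exact (hz hv).elim
          · rcases eq_or_ne i j0 with rfl | hne
            · cases b
              · exact Or.inl rfl
              · exact Or.inr rfl
            · cases b
              · -- v = x i, i ≠ j0
                rcases vis_xy (Ne.symm hne) (hX (x j0) hx0 (y i))
                  with ⟨-, h⟩ | ⟨h, -⟩
                · exact (h hv).elim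
                · exact (h hy0).elim
              · -- v = y i
                rcases vis_xy hne (IsMVisible.symm' (hX (y j0) hy0 (x i)))
                  with ⟨-, h⟩ | ⟨h, -⟩
                · exact (h hx0).elim
                · exact (h hv).elim
        calc X.ncard ≤ ({x j0, y j0} : Set (VV k)).ncard :=
              Set.ncard_le_ncard hsub (Set.toFinite _)
          _ = 2 := Set.ncard_pair (by simp [x, y])
          _ ≤ k := hk
      · push_neg at hex
        have hnf : ∀ i, x i ∈ X → y i ∈ X → False := fun i h1 h2 => hex i h1 h2
        have hT : ∀ v ∈ X, proj v ∈
            (((Set.univ : Set (Bool ⊕ Fin k)) \ {Sum.inl true}) \ {Sum.inl false}) := by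
          rintro (a | ⟨i, b⟩) hv
          · cases a
            · exact (hw hv).elim
            · exact (hz hv).elim
          · simp [proj]
        have := ncard_le_of_proj hnf hT
        rwa [ncard_diff2 _ _ (by simp)] at this

lemma x_inj : Function.Injective (x (k := k)) := by
  intro i j h
  simpa [x] using h

lemma mv_lower (hk0 : 0 < k) :
    ∃ X : Set (VV k), IsMVSet (GG k) X ∧ X.ncard = k + 1 := by
  refine ⟨insert z (Set.range x), ?_, ?_⟩
  · have hvzx : ∀ i : Fin k, IsMVisible (GG k) (insert z (Set.range x)) z (x i) := by
      intro i
      refine ⟨Walk.cons (adj_z.mpr ⟨i, rfl⟩) (Walk.cons axy.symm Walk.nil), by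
        rw [dist_zx]; simp, ?_⟩
      intro s hs hsX
      have hs' : s = z ∨ s = y i ∨ s = x i := by simpa using hs
      rcases hs' with rfl | rfl | rfl
      · exact Or.inl rfl
      · rcases hsX with h | ⟨j, hj⟩
        · simp [z, y] at h
        · simp [x, y] at hj
      · exact Or.inr rfl
    intro u hu v hv
    rcases hu with rfl | ⟨i, rfl⟩
    · rcases hv with rfl | ⟨i, rfl⟩
      · exact IsMVisible.refl' _
      · exact hvzx i
    · rcases hv with rfl | ⟨j, rfl⟩
      · exact IsMVisible.symm' (hvzx i)
      · rcases eq_or_ne i j with rfl | hij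
        · exact IsMVisible.refl' _
        · refine ⟨Walk.cons axw (Walk.cons (adj_w.mpr ⟨j, rfl⟩) Walk.nil), by
            rw [dist_xx hij]; simp, ?_⟩
          intro s hs hsX
          have hs' : s = x i ∨ s = w ∨ s = x j := by simpa using hs
          rcases hs' with rfl | rfl | rfl
          · exact Or.inl rfl
          · rcases hsX with h | ⟨l, hl⟩
            · simp [z, w] at h
            · simp [x, w] at hl
          · exact Or.inr rfl
  · rw [Set.ncard_insert_of_notMem (by rintro ⟨i, hi⟩; simp [z, x] at hi) (Set.toFinite _),
      ← Set.image_univ, Set.ncard_image_of_injective _ x_inj, Set.ncard_univ,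
      Nat.card_eq_fintype_card]
    simp

lemma outer_lower (hk0 : 0 < k) :
    ∃ X : Set (VV k), IsOuterMVSet (GG k) X ∧ X.ncard = k := by
  refine ⟨Set.range x, ?_, ?_⟩
  · rintro u ⟨i, rfl⟩ v
    have hwX : (w : VV k) ∉ Set.range x := by rintro ⟨l, hl⟩; simp [x, w] at hl
    have hzX : (z : VV k) ∉ Set.range x := by rintro ⟨l, hl⟩; simp [x, z] at hl
    have hyX : ∀ l : Fin k, (y l : VV k) ∉ Set.range x := by
      rintro l ⟨m, hm⟩; simp [x, y] at hm
    rcases v with a | ⟨j, b⟩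
    · cases a
      · -- v = w
        show IsMVisible (GG k) (Set.range x) (x i) w
        refine ⟨Walk.cons axw Walk.nil, by
          rw [SimpleGraph.dist_eq_one_iff_adj.mpr axw]; simp, ?_⟩
        intro s hs hsX
        have hs' : s = x i ∨ s = w := by simpa using hs
        rcases hs' with rfl | rfl
        · exact Or.inl rfl
        · exact Or.inr rfl
      · -- v = z
        show IsMVisible (GG k) (Set.range x) (x i) z
        refine ⟨Walk.cons axy (Walk.cons ayz Walk.nil), by
          rw [SimpleGraph.dist_comm, dist_zx]; simp, ?_⟩
        intro s hs hsX
        have hs' : s = x i ∨ s = y i ∨ s = z := by simpa using hs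
        rcases hs' with rfl | rfl | rfl
        · exact Or.inl rfl
        · exact (hyX i hsX).elim
        · exact Or.inr rfl
    · cases b
      · -- v = x j
        show IsMVisible (GG k) (Set.range x) (x i) (x j)
        rcases eq_or_ne i j with rfl | hij
        · exact IsMVisible.refl' _
        · refine ⟨Walk.cons axw (Walk.cons (adj_w.mpr ⟨j, rfl⟩) Walk.nil), by
            rw [dist_xx hij]; simp, ?_⟩
          intro s hs hsX
          have hs' : s = x i ∨ s = w ∨ s = x j := by simpa using hs
          rcases hs' with rfl | rfl | rfl
          · exact Or.inl rfl
          · exact (hwX hsX).elim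
          · exact Or.inr rfl
      · -- v = y j
        show IsMVisible (GG k) (Set.range x) (x i) (y j)
        rcases eq_or_ne i j with rfl | hij
        · refine ⟨Walk.cons axy Walk.nil, by
            rw [SimpleGraph.dist_eq_one_iff_adj.mpr axy]; simp, ?_⟩
          intro s hs hsX
          have hs' : s = x i ∨ s = y i := by simpa using hs
          rcases hs' with rfl | rfl
          · exact Or.inl rfl
          · exact Or.inr rfl
        · refine ⟨Walk.cons axy (Walk.cons ayz (Walk.cons (adj_z.mpr ⟨j, rfl⟩) Walk.nil)), by
            rw [dist_xy hij]; simp, ?_⟩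
          intro s hs hsX
          have hs' : s = x i ∨ s = y i ∨ s = z ∨ s = y j := by simpa using hs
          rcases hs' with rfl | rfl | rfl | rfl
          · exact Or.inl rfl
          · exact (hyX i hsX).elim
          · exact (hzX hsX).elim
          · exact Or.inr rfl
  · rw [← Set.image_univ, Set.ncard_image_of_injective _ x_inj, Set.ncard_univ,
      Nat.card_eq_fintype_card]
    simp

end Aux

theorem stmt_12 (k : ℕ) (hk : 2 ≤ k) :
    mu ((Hgraph k).deleteEdges
        {s((Sum.inl true : Bool ⊕ Fin k × Bool), Sum.inl false)}) = k + 1 ∧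
    muO ((Hgraph k).deleteEdges
        {s((Sum.inl true : Bool ⊕ Fin k × Bool), Sum.inl false)}) = k := by
  have hk0 : 0 < k := by omega
  constructor
  · show mu (Aux.GG k) = k + 1
    obtain ⟨X0, hX0, hc0⟩ := Aux.mv_lower (k := k) hk0
    have hmem : k + 1 ∈ {n | ∃ X : Set (Aux.VV k), IsMVSet (Aux.GG k) X ∧ X.ncard = n} :=
      ⟨X0, hX0, hc0⟩
    have hub : ∀ n ∈ {n | ∃ X : Set (Aux.VV k), IsMVSet (Aux.GG k) X ∧ X.ncard = n},
        n ≤ k + 1 := by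
      rintro n ⟨X, hX, rfl⟩
      exact Aux.mv_card_le hk0 hX
    exact le_antisymm (csSup_le ⟨k + 1, hmem⟩ hub) (le_csSup ⟨k + 1, hub⟩ hmem)
  · show muO (Aux.GG k) = k
    obtain ⟨X0, hX0, hc0⟩ := Aux.outer_lower (k := k) hk0
    have hmem : k ∈ {n | ∃ X : Set (Aux.VV k), IsOuterMVSet (Aux.GG k) X ∧ X.ncard = n} :=
      ⟨X0, hX0, hc0⟩
    have hub : ∀ n ∈ {n | ∃ X : Set (Aux.VV k), IsOuterMVSet (Aux.GG k) X ∧ X.ncard = n},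
        n ≤ k := by
      rintro n ⟨X, hX, rfl⟩
      exact Aux.outer_card_le hk hX
    exact le_antisymm (csSup_le ⟨k, hmem⟩ hub) (le_csSup ⟨k, hub⟩ hmem)
end

section
/- For every integer k ≥ 3, let H_k be the graph with vertex set {z,w} ∪ {x_i, y_i : i ∈ [k]} where x_i y_i z w x_i is a 4-cycle for each i, and let e = zw. Then μ_d(H_k − e) = 2 and μ_t(H_k − e) = 0. -/
open SimpleGraph

namespace HkAux

abbrev VV (k : ℕ) := Bool ⊕ Fin k × Bool
def zz (k : ℕ) : VV k := Sum.inl true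
def ww (k : ℕ) : VV k := Sum.inl false
def xx {k : ℕ} (i : Fin k) : VV k := Sum.inr (i, false)
def yy {k : ℕ} (i : Fin k) : VV k := Sum.inr (i, true)
def GG (k : ℕ) : SimpleGraph (VV k) :=
  (Hgraph k).deleteEdges {s((Sum.inl true : VV k), Sum.inl false)}

variable {k : ℕ}

lemma adj_iff (u v : VV k) : (GG k).Adj u v ↔
    ∃ i : Fin k, (u = ww k ∧ v = xx i) ∨ (u = xx i ∧ v = ww k) ∨
      (u = xx i ∧ v = yy i) ∨ (u = yy i ∧ v = xx i) ∨
      (u = yy i ∧ v = zz k) ∨ (u = zz k ∧ v = yy i) := by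
  rcases u with a | ⟨i, b⟩ <;> rcases v with c | ⟨j, d⟩ <;>
    simp [GG, Hgraph, Hrel, deleteEdges_adj, fromRel_adj, zz, ww, xx, yy,
      Sym2.eq_iff, Prod.ext_iff] <;>
    first
    | (cases a <;> cases c <;> simp <;> tauto)
    | (cases a <;> cases d <;> simp <;> tauto)
    | (cases b <;> cases c <;> simp <;> tauto)
    | (cases b <;> cases d <;> simp <;> tauto)
    | skip

-- basic distinctness simp facts
@[simp] lemma ww_ne_zz : (ww k) ≠ zz k := by simp [ww, zz]
@[simp] lemma zz_ne_ww : (zz k) ≠ ww k := by simp [ww, zz]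
@[simp] lemma xx_ne_ww (i : Fin k) : xx i ≠ ww k := by simp [xx, ww]
@[simp] lemma xx_ne_zz (i : Fin k) : xx i ≠ zz k := by simp [xx, zz]
@[simp] lemma yy_ne_ww (i : Fin k) : yy i ≠ ww k := by simp [yy, ww]
@[simp] lemma yy_ne_zz (i : Fin k) : yy i ≠ zz k := by simp [yy, zz]
@[simp] lemma xx_ne_yy (i j : Fin k) : xx i ≠ yy j := by simp [xx, yy]
@[simp] lemma yy_ne_xx (i j : Fin k) : yy i ≠ xx j := by simp [xx, yy]
@[simp] lemma xx_inj {i j : Fin k} : xx i = xx j ↔ i = j := by simp [xx]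
@[simp] lemma yy_inj {i j : Fin k} : yy i = yy j ↔ i = j := by simp [yy]
@[simp] lemma ww_ne_xx (i : Fin k) : ww k ≠ xx i := by simp [xx, ww]
@[simp] lemma zz_ne_xx (i : Fin k) : zz k ≠ xx i := by simp [xx, zz]
@[simp] lemma ww_ne_yy (i : Fin k) : ww k ≠ yy i := by simp [yy, ww]
@[simp] lemma zz_ne_yy (i : Fin k) : zz k ≠ yy i := by simp [yy, zz]

lemma adj_wx (i : Fin k) : (GG k).Adj (ww k) (xx i) := by
  rw [adj_iff]; exact ⟨i, Or.inl ⟨rfl, rfl⟩⟩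
lemma adj_xy (i : Fin k) : (GG k).Adj (xx i) (yy i) := by
  rw [adj_iff]; exact ⟨i, by tauto⟩
lemma adj_yz (i : Fin k) : (GG k).Adj (yy i) (zz k) := by
  rw [adj_iff]; exact ⟨i, by tauto⟩

lemma adj_w {v : VV k} (h : (GG k).Adj (ww k) v) : ∃ i, v = xx i := by
  rw [adj_iff] at h; obtain ⟨i, h⟩ := h
  rcases h with ⟨h1,h2⟩|⟨h1,h2⟩|⟨h1,h2⟩|⟨h1,h2⟩|⟨h1,h2⟩|⟨h1,h2⟩ <;> simp_all <;> exact ⟨i, rfl⟩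
lemma adj_z {v : VV k} (h : (GG k).Adj (zz k) v) : ∃ i, v = yy i := by
  rw [adj_iff] at h; obtain ⟨i, h⟩ := h
  rcases h with ⟨h1,h2⟩|⟨h1,h2⟩|⟨h1,h2⟩|⟨h1,h2⟩|⟨h1,h2⟩|⟨h1,h2⟩ <;> simp_all <;> exact ⟨i, rfl⟩
lemma adj_x {i : Fin k} {v : VV k} (h : (GG k).Adj (xx i) v) : v = ww k ∨ v = yy i := by
  rw [adj_iff] at h; obtain ⟨j, h⟩ := h
  rcases h with ⟨h,h'⟩|⟨h,h'⟩|⟨h,h'⟩|⟨h,h'⟩|⟨h,h'⟩|⟨h,h'⟩ <;> simp_all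
lemma adj_y {i : Fin k} {v : VV k} (h : (GG k).Adj (yy i) v) : v = zz k ∨ v = xx i := by
  rw [adj_iff] at h; obtain ⟨j, h⟩ := h
  rcases h with ⟨h,h'⟩|⟨h,h'⟩|⟨h,h'⟩|⟨h,h'⟩|⟨h,h'⟩|⟨h,h'⟩ <;> simp_all

-- walk decomposition
lemma walk_two {V : Type*} {G : SimpleGraph V} {u v : V} (p : G.Walk u v)
    (hp : p.length = 2) :
    ∃ m, G.Adj u m ∧ G.Adj m v ∧ p.support = [u, m, v] := by
  cases p with
  | nil => simp at hp
  | cons h q =>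
    cases q with
    | nil => simp at hp
    | cons h' r =>
      cases r with
      | nil => exact ⟨_, h, h', by simp⟩
      | cons h'' s => simp [Walk.length_cons] at hp

lemma walk_three {V : Type*} {G : SimpleGraph V} {u v : V} (p : G.Walk u v)
    (hp : p.length = 3) :
    ∃ a b, G.Adj u a ∧ G.Adj a b ∧ G.Adj b v ∧ p.support = [u, a, b, v] := by
  cases p with
  | nil => simp at hp
  | cons h q =>
    cases q with
    | nil => simp at hp
    | cons h' r =>
      cases r with
      | nil => simp [Walk.length_cons] at hp
      | cons h'' s =>
        cases s with
        | nil => exact ⟨_, _, h, h', h'', by simp⟩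
        | cons h3 t => simp [Walk.length_cons] at hp

-- explicit walks
def W2 {V : Type*} {G : SimpleGraph V} {u m v : V} (h1 : G.Adj u m) (h2 : G.Adj m v) :
    G.Walk u v := Walk.cons h1 (Walk.cons h2 Walk.nil)
def W3 {V : Type*} {G : SimpleGraph V} {u a b v : V} (h1 : G.Adj u a) (h2 : G.Adj a b)
    (h3 : G.Adj b v) : G.Walk u v := Walk.cons h1 (Walk.cons h2 (Walk.cons h3 Walk.nil))

@[simp] lemma W2_length {V : Type*} {G : SimpleGraph V} {u m v : V} (h1 : G.Adj u m)
    (h2 : G.Adj m v) : (W2 h1 h2).length = 2 := by simp [W2]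
@[simp] lemma W3_length {V : Type*} {G : SimpleGraph V} {u a b v : V} (h1 : G.Adj u a)
    (h2 : G.Adj a b) (h3 : G.Adj b v) : (W3 h1 h2 h3).length = 3 := by simp [W3]
@[simp] lemma W2_support {V : Type*} {G : SimpleGraph V} {u m v : V} (h1 : G.Adj u m)
    (h2 : G.Adj m v) : (W2 h1 h2).support = [u, m, v] := by simp [W2]
@[simp] lemma W3_support {V : Type*} {G : SimpleGraph V} {u a b v : V} (h1 : G.Adj u a)
    (h2 : G.Adj a b) (h3 : G.Adj b v) : (W3 h1 h2 h3).support = [u, a, b, v] := by simp [W3]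


-- generic distance lemmas
lemma dist_two' {V : Type*} {G : SimpleGraph V} {u v : V} (hne : u ≠ v)
    (hadj : ¬ G.Adj u v) (p : G.Walk u v) (hp : p.length = 2) : G.dist u v = 2 := by
  have hle : G.dist u v ≤ 2 := hp ▸ SimpleGraph.dist_le p
  have h0 : G.dist u v ≠ 0 := by
    intro h0
    rcases SimpleGraph.dist_eq_zero_iff_eq_or_not_reachable.mp h0 with h | h
    · exact hne h
    · exact h ⟨p⟩
  have h1 : G.dist u v ≠ 1 := fun h1 => hadj (SimpleGraph.dist_eq_one_iff_adj.mp h1)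
  omega

lemma dist_three' {V : Type*} {G : SimpleGraph V} {u v : V} (hne : u ≠ v)
    (hadj : ¬ G.Adj u v) (hmid : ∀ m, G.Adj u m → G.Adj m v → False)
    (p : G.Walk u v) (hp : p.length = 3) : G.dist u v = 3 := by
  have hle : G.dist u v ≤ 3 := hp ▸ SimpleGraph.dist_le p
  have h0 : G.dist u v ≠ 0 := by
    intro h0
    rcases SimpleGraph.dist_eq_zero_iff_eq_or_not_reachable.mp h0 with h | h
    · exact hne h
    · exact h ⟨p⟩
  have h1 : G.dist u v ≠ 1 := fun h1 => hadj (SimpleGraph.dist_eq_one_iff_adj.mp h1)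
  have h2 : G.dist u v ≠ 2 := by
    intro h2
    obtain ⟨q, hq⟩ := (Reachable.exists_walk_length_eq_dist ⟨p⟩ : _)
    rw [h2] at hq
    obtain ⟨m, ha, hb, -⟩ := walk_two q hq
    exact hmid m ha hb
  omega

-- non-adjacency facts
lemma not_adj_xx {i j : Fin k} : ¬ (GG k).Adj (xx i) (xx j) := by
  intro h; rcases adj_x h with h | h <;> simp at h
lemma not_adj_yy {i j : Fin k} : ¬ (GG k).Adj (yy i) (yy j) := by
  intro h; rcases adj_y h with h | h <;> simp at h
lemma not_adj_wy {i : Fin k} : ¬ (GG k).Adj (ww k) (yy i) := by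
  intro h; obtain ⟨l, h⟩ := adj_w h; simp at h
lemma not_adj_zx {i : Fin k} : ¬ (GG k).Adj (zz k) (xx i) := by
  intro h; obtain ⟨l, h⟩ := adj_z h; simp at h
lemma not_adj_zw : ¬ (GG k).Adj (zz k) (ww k) := by
  intro h; obtain ⟨l, h⟩ := adj_z h; simp at h
lemma not_adj_xy' {i j : Fin k} (hij : i ≠ j) : ¬ (GG k).Adj (xx i) (yy j) := by
  intro h; rcases adj_x h with h | h <;> simp at h; exact hij h.symm

-- concrete distances
lemma dist_xx {i j : Fin k} (hij : i ≠ j) : (GG k).dist (xx i) (xx j) = 2 :=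
  dist_two' (by simp [hij]) not_adj_xx (W2 (adj_wx i).symm (adj_wx j)) (by simp)
lemma dist_yy {i j : Fin k} (hij : i ≠ j) : (GG k).dist (yy i) (yy j) = 2 :=
  dist_two' (by simp [hij]) not_adj_yy (W2 (adj_yz i) (adj_yz j).symm) (by simp)
lemma dist_wy (i : Fin k) : (GG k).dist (ww k) (yy i) = 2 :=
  dist_two' (by simp) not_adj_wy (W2 (adj_wx i) (adj_xy i)) (by simp)
lemma dist_zx (i : Fin k) : (GG k).dist (zz k) (xx i) = 2 :=
  dist_two' (by simp) not_adj_zx (W2 (adj_yz i).symm (adj_xy i).symm) (by simp)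
lemma dist_zw (i : Fin k) : (GG k).dist (zz k) (ww k) = 3 := by
  refine dist_three' (by simp) not_adj_zw ?_
    (W3 (adj_yz i).symm (adj_xy i).symm (adj_wx i).symm) (by simp)
  intro m h1 h2
  obtain ⟨l, rfl⟩ := adj_z h1
  rcases adj_y h2 with h | h <;> simp at h
lemma dist_xy' {i j : Fin k} (hij : i ≠ j) : (GG k).dist (xx i) (yy j) = 3 := by
  refine dist_three' (by simp) (not_adj_xy' hij) ?_
    (W3 (adj_wx i).symm (adj_wx j) (adj_xy j)) (by simp)
  intro m h1 h2
  rcases adj_x h1 with rfl | rfl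
  · obtain ⟨l, h⟩ := adj_w h2; simp at h
  · rcases adj_y h2 with h | h <;> simp at h


end HkAux

-- visibility helpers (defs IsMVisible etc. assumed present above in final file)

namespace HkAux
variable {k : ℕ}

lemma vis_self {V : Type*} {G : SimpleGraph V} {X : Set V} (u : V) :
    IsMVisible G X u u :=
  ⟨Walk.nil, by simp [SimpleGraph.dist_self], by simp⟩

lemma vis_adj {V : Type*} {G : SimpleGraph V} {X : Set V} {u v : V} (h : G.Adj u v) :
    IsMVisible G X u v :=
  ⟨h.toWalk, by simp [SimpleGraph.dist_eq_one_iff_adj.mpr h], by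
    intro w hw _
    simp [Walk.support_cons] at hw
    tauto⟩

lemma vis_symm {V : Type*} {G : SimpleGraph V} {X : Set V} {u v : V}
    (h : IsMVisible G X u v) : IsMVisible G X v u := by
  obtain ⟨P, hl, hs⟩ := h
  exact ⟨P.reverse, by rw [Walk.length_reverse, SimpleGraph.dist_comm]; exact hl, by
    intro w hw hwX
    rw [Walk.support_reverse, List.mem_reverse] at hw
    exact (hs w hw hwX).symm⟩

lemma vis_two {V : Type*} {G : SimpleGraph V} {X : Set V} {u m v : V}
    (h1 : G.Adj u m) (h2 : G.Adj m v) (hd : G.dist u v = 2) (hm : m ∉ X) :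
    IsMVisible G X u v :=
  ⟨W2 h1 h2, by simp [hd], by
    intro w hw hwX
    rw [W2_support] at hw
    simp at hw
    rcases hw with rfl | rfl | rfl
    · exact Or.inl rfl
    · exact absurd hwX hm
    · exact Or.inr rfl⟩

lemma vis_three {V : Type*} {G : SimpleGraph V} {X : Set V} {u a b v : V}
    (h1 : G.Adj u a) (h2 : G.Adj a b) (h3 : G.Adj b v) (hd : G.dist u v = 3)
    (ha : a ∉ X) (hb : b ∉ X) : IsMVisible G X u v :=
  ⟨W3 h1 h2 h3, by simp [hd], by
    intro w hw hwX
    rw [W3_support] at hw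
    simp at hw
    rcases hw with rfl | rfl | rfl | rfl
    · exact Or.inl rfl
    · exact absurd hwX ha
    · exact absurd hwX hb
    · exact Or.inr rfl⟩


lemma reach_w (hk : 0 < k) (u : VV k) : (GG k).Reachable (ww k) u := by
  rcases u with a | ⟨i, b⟩
  · cases a
    · exact Reachable.refl _
    · exact ⟨W3 (adj_wx ⟨0, hk⟩) (adj_xy ⟨0, hk⟩) (adj_yz ⟨0, hk⟩)⟩
  · cases b
    · exact ⟨(adj_wx i).toWalk⟩
    · exact ⟨W2 (adj_wx i) (adj_xy i)⟩

lemma total_empty (hk : 0 < k) : IsTotalMVSet (GG k) ∅ := by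
  intro u v
  obtain ⟨p, hp⟩ := ((reach_w hk u).symm.trans (reach_w hk v)).exists_walk_length_eq_dist
  exact ⟨p, hp, fun w _ hw => absurd hw (Set.notMem_empty w)⟩

lemma total_eq_empty (hk : 3 ≤ k) {X : Set (VV k)} (hX : IsTotalMVSet (GG k) X) :
    X = ∅ := by
  have h0 : (0 : ℕ) < k := by omega
  have h1 : (1 : ℕ) < k := by omega
  set i0 : Fin k := ⟨0, h0⟩ with hi0
  set i1 : Fin k := ⟨1, h1⟩ with hi1
  have ne01 : i0 ≠ i1 := by simp [hi0, hi1, Fin.ext_iff]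
  rw [Set.eq_empty_iff_forall_notMem]
  rintro (a | ⟨i, b⟩) hv
  · cases a
    · -- ww ∈ X : pair (xx i0, xx i1)
      obtain ⟨P, hl, hs⟩ := hX (xx i0) (xx i1)
      rw [dist_xx ne01] at hl
      obtain ⟨m, h1', h2', hsup⟩ := walk_two P hl
      rcases adj_x h1' with rfl | rfl
      · have := hs (ww k) (by rw [hsup]; simp) hv
        simp at this
      · rcases adj_y h2' with h | h
        · simp at h
        · rw [xx_inj] at h; exact ne01 h.symm
    · -- zz ∈ X : pair (yy i0, yy i1)
      obtain ⟨P, hl, hs⟩ := hX (yy i0) (yy i1)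
      rw [dist_yy ne01] at hl
      obtain ⟨m, h1', h2', hsup⟩ := walk_two P hl
      rcases adj_y h1' with rfl | rfl
      · have := hs (zz k) (by rw [hsup]; simp) hv
        simp at this
      · rcases adj_x h2' with h | h
        · simp at h
        · rw [yy_inj] at h; exact ne01 h.symm
  · cases b
    · -- xx i ∈ X : pair (ww, yy i)
      obtain ⟨P, hl, hs⟩ := hX (ww k) (yy i)
      rw [dist_wy] at hl
      obtain ⟨m, h1', h2', hsup⟩ := walk_two P hl
      obtain ⟨l, rfl⟩ := adj_w h1'
      have hli : l = i := by
        rcases adj_x h2' with h | h <;> simp at h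
        exact h.symm
      subst hli
      have := hs (xx l) (by rw [hsup]; simp) hv
      simp at this
    · -- yy i ∈ X : pair (zz, xx i)
      obtain ⟨P, hl, hs⟩ := hX (zz k) (xx i)
      rw [dist_zx] at hl
      obtain ⟨m, h1', h2', hsup⟩ := walk_two P hl
      obtain ⟨l, rfl⟩ := adj_z h1'
      have hli : l = i := by
        rcases adj_y h2' with h | h <;> simp at h
        exact h.symm
      subst hli
      have := hs (yy l) (by rw [hsup]; simp) hv
      simp at this

lemma muT_eq (hk : 3 ≤ k) : muT (GG k) = 0 := by
  have hset : {n | ∃ X : Set (VV k), IsTotalMVSet (GG k) X ∧ X.ncard = n} = {0} := by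
    ext n
    simp only [Set.mem_setOf_eq, Set.mem_singleton_iff]
    constructor
    · rintro ⟨X, hX, rfl⟩
      rw [total_eq_empty hk hX]; simp
    · rintro rfl
      exact ⟨∅, total_empty (by omega), by simp⟩
  rw [muT, hset, csSup_singleton]


lemma mid_w {X : Set (VV k)} {i j : Fin k} (hij : i ≠ j)
    (h : IsMVisible (GG k) X (xx i) (xx j)) : ww k ∉ X := by
  intro hw
  obtain ⟨P, hl, hs⟩ := h
  rw [dist_xx hij] at hl
  obtain ⟨m, h1, h2, hsup⟩ := walk_two P hl
  rcases adj_x h1 with rfl | rfl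
  · have := hs (ww k) (by rw [hsup]; simp) hw
    simp at this
  · rcases adj_y h2 with h | h
    · simp at h
    · rw [xx_inj] at h; exact hij h.symm

lemma mid_z {X : Set (VV k)} {i j : Fin k} (hij : i ≠ j)
    (h : IsMVisible (GG k) X (yy i) (yy j)) : zz k ∉ X := by
  intro hz
  obtain ⟨P, hl, hs⟩ := h
  rw [dist_yy hij] at hl
  obtain ⟨m, h1, h2, hsup⟩ := walk_two P hl
  rcases adj_y h1 with rfl | rfl
  · have := hs (zz k) (by rw [hsup]; simp) hz
    simp at this
  · rcases adj_x h2 with h | h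
    · simp at h
    · rw [yy_inj] at h; exact hij h.symm

lemma dual_ncard_le (hk : 3 ≤ k) {X : Set (VV k)} (hX : IsDualMVSet (GG k) X) :
    X.ncard ≤ 2 := by
  have h0 : (0 : ℕ) < k := by omega
  have h1 : (1 : ℕ) < k := by omega
  have h2 : (2 : ℕ) < k := by omega
  set i0 : Fin k := ⟨0, h0⟩ with hi0
  set i1 : Fin k := ⟨1, h1⟩ with hi1
  set i2 : Fin k := ⟨2, h2⟩ with hi2
  have ne01 : i0 ≠ i1 := by simp [hi0, hi1, Fin.ext_iff]
  have ne02 : i0 ≠ i2 := by simp [hi0, hi2, Fin.ext_iff]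
  have ne12 : i1 ≠ i2 := by simp [hi1, hi2, Fin.ext_iff]
  -- w ∉ X
  have hw : ww k ∉ X := by
    by_cases hx0 : xx i0 ∈ X <;> by_cases hx1 : xx i1 ∈ X <;> by_cases hx2 : xx i2 ∈ X <;>
      first
      | exact mid_w ne01 (hX.1 _ hx0 _ hx1)
      | exact mid_w ne01 (hX.2 _ hx0 _ hx1)
      | exact mid_w ne02 (hX.1 _ hx0 _ hx2)
      | exact mid_w ne02 (hX.2 _ hx0 _ hx2)
      | exact mid_w ne12 (hX.1 _ hx1 _ hx2)
      | exact mid_w ne12 (hX.2 _ hx1 _ hx2)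
  -- z ∉ X
  have hz : zz k ∉ X := by
    by_cases hy0 : yy i0 ∈ X <;> by_cases hy1 : yy i1 ∈ X <;> by_cases hy2 : yy i2 ∈ X <;>
      first
      | exact mid_z ne01 (hX.1 _ hy0 _ hy1)
      | exact mid_z ne01 (hX.2 _ hy0 _ hy1)
      | exact mid_z ne02 (hX.1 _ hy0 _ hy2)
      | exact mid_z ne02 (hX.2 _ hy0 _ hy2)
      | exact mid_z ne12 (hX.1 _ hy1 _ hy2)
      | exact mid_z ne12 (hX.2 _ hy1 _ hy2)
  -- x in implies y in
  have hxy : ∀ i : Fin k, xx i ∈ X → yy i ∈ X := by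
    intro i hxi
    by_contra hyi
    obtain ⟨P, hl, hs⟩ := hX.2 _ hw _ hyi
    rw [dist_wy] at hl
    obtain ⟨m, ha, hb, hsup⟩ := walk_two P hl
    obtain ⟨l, rfl⟩ := adj_w ha
    have hli : l = i := by
      rcases adj_x hb with h | h
      · simp at h
      · rw [yy_inj] at h; exact h.symm
    subst hli
    have := hs (xx l) (by rw [hsup]; simp) hxi
    simp at this
  -- y in implies x in
  have hyx : ∀ i : Fin k, yy i ∈ X → xx i ∈ X := by
    intro i hyi
    by_contra hxi
    obtain ⟨P, hl, hs⟩ := hX.2 _ hz _ hxi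
    rw [dist_zx] at hl
    obtain ⟨m, ha, hb, hsup⟩ := walk_two P hl
    obtain ⟨l, rfl⟩ := adj_z ha
    have hli : l = i := by
      rcases adj_y hb with h | h
      · simp at h
      · rw [xx_inj] at h; exact h.symm
    subst hli
    have := hs (yy l) (by rw [hsup]; simp) hyi
    simp at this
  -- no two distinct indices
  have hpair : ∀ i j : Fin k, i ≠ j → xx i ∈ X → xx j ∈ X → False := by
    intro i j hij hxi hxj
    obtain ⟨P, hl, hs⟩ := hX.1 _ hxi _ (hxy j hxj)
    rw [dist_xy' hij] at hl
    obtain ⟨a, b, ha, hb, hc, hsup⟩ := walk_three P hl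
    rcases adj_x ha with rfl | rfl
    · obtain ⟨l, rfl⟩ := adj_w hb
      have hlj : l = j := by
        rcases adj_x hc with h | h
        · simp at h
        · rw [yy_inj] at h; exact h.symm
      subst hlj
      have := hs (xx l) (by rw [hsup]; simp) hxj
      rcases this with h | h
      · rw [xx_inj] at h; exact hij h.symm
      · simp at h
    · have := hs (yy i) (by rw [hsup]; simp) (hxy i hxi)
      rcases this with h | h
      · simp at h
      · rw [yy_inj] at h; exact hij h
  -- conclude
  rcases Set.eq_empty_or_nonempty X with rfl | ⟨v, hv⟩
  · simp
  rcases v with a | ⟨i, b⟩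
  · cases a
    · exact absurd hv hw
    · exact absurd hv hz
  · have hxi : xx i ∈ X := by
      cases b
      · exact hv
      · exact hyx i hv
    have hsub : X ⊆ {xx i, yy i} := by
      rintro (a | ⟨j, c⟩) hu
      · cases a
        · exact absurd hu hw
        · exact absurd hu hz
      · have hxj : xx j ∈ X := by
          cases c
          · exact hu
          · exact hyx j hu
        have hji : j = i := by
          by_contra hne
          exact hpair j i hne hxj hxi
        subst hji
        cases c
        · exact Or.inl rfl
        · exact Or.inr rfl
    calc X.ncard ≤ ({xx i, yy i} : Set (VV k)).ncard :=
          Set.ncard_le_ncard hsub ((Set.finite_singleton _).insert _)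
      _ ≤ 2 := by rw [Set.ncard_pair (xx_ne_yy i i)]


lemma dual_construct (hk : 3 ≤ k) :
    ∃ X : Set (VV k), IsDualMVSet (GG k) X ∧ X.ncard = 2 := by
  have h0 : (0 : ℕ) < k := by omega
  have h1 : (1 : ℕ) < k := by omega
  set i0 : Fin k := ⟨0, h0⟩ with hi0
  set i1 : Fin k := ⟨1, h1⟩ with hi1
  have ne10 : i1 ≠ i0 := by simp [hi0, hi1, Fin.ext_iff]
  refine ⟨{xx i0, yy i0}, ⟨?_, ?_⟩, Set.ncard_pair (xx_ne_yy i0 i0)⟩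
  · -- pairs inside X
    rintro u hu v hv
    rcases hu with rfl | hu
    · rcases hv with rfl | hv
      · exact vis_self _
      · rw [Set.mem_singleton_iff] at hv; subst hv
        exact vis_adj (adj_xy i0)
    · rw [Set.mem_singleton_iff] at hu; subst hu
      rcases hv with rfl | hv
      · exact vis_adj (adj_xy i0).symm
      · rw [Set.mem_singleton_iff] at hv; subst hv
        exact vis_self _
  · -- pairs outside X
    have hwX : ww k ∉ ({xx i0, yy i0} : Set (VV k)) := by simp
    have hzX : zz k ∉ ({xx i0, yy i0} : Set (VV k)) := by simp
    have hxX : ∀ j : Fin k, j ≠ i0 → xx j ∉ ({xx i0, yy i0} : Set (VV k)) := by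
      intro j hj; simp [hj]
    have hyX : ∀ j : Fin k, j ≠ i0 → yy j ∉ ({xx i0, yy i0} : Set (VV k)) := by
      intro j hj; simp [hj]
    have hxne : ∀ j : Fin k, (Sum.inr (j, false) : VV k) ∉ ({xx i0, yy i0} : Set (VV k)) →
        j ≠ i0 := by
      intro j hj h; subst h; exact hj (Or.inl rfl)
    have hyne : ∀ j : Fin k, (Sum.inr (j, true) : VV k) ∉ ({xx i0, yy i0} : Set (VV k)) →
        j ≠ i0 := by
      intro j hj h; subst h; exact hj (Or.inr rfl)
    rintro (a | ⟨j, b⟩) hu (c | ⟨l, d⟩) hv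
    · -- inl, inl
      cases a <;> cases c
      · exact vis_self _
      · -- (w, z)
        exact vis_symm (vis_three (adj_yz i1).symm (adj_xy i1).symm (adj_wx i1).symm
          (dist_zw i1) (hyX i1 ne10) (hxX i1 ne10))
      · -- (z, w)
        exact vis_three (adj_yz i1).symm (adj_xy i1).symm (adj_wx i1).symm
          (dist_zw i1) (hyX i1 ne10) (hxX i1 ne10)
      · exact vis_self _
    · -- inl, inr
      cases a <;> cases d
      · exact vis_adj (adj_wx l)
      · exact vis_two (adj_wx l) (adj_xy l) (dist_wy l) (hxX l (hyne l hv))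
      · exact vis_two (adj_yz l).symm (adj_xy l).symm (dist_zx l) (hyX l (hxne l hv))
      · exact vis_adj (adj_yz l).symm
    · -- inr, inl
      cases b <;> cases c
      · exact vis_adj (adj_wx j).symm
      · exact vis_symm (vis_two (adj_yz j).symm (adj_xy j).symm (dist_zx j)
          (hyX j (hxne j hu)))
      · exact vis_symm (vis_two (adj_wx j) (adj_xy j) (dist_wy j) (hxX j (hyne j hu)))
      · exact vis_adj (adj_yz j)
    · -- inr, inr
      by_cases hjl : j = l
      · subst hjl
        cases b <;> cases d
        · exact vis_self _
        · exact vis_adj (adj_xy j)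
        · exact vis_adj (adj_xy j).symm
        · exact vis_self _
      · cases b <;> cases d
        · exact vis_two (adj_wx j).symm (adj_wx l) (dist_xx hjl) hwX
        · exact vis_three (adj_wx j).symm (adj_wx l) (adj_xy l) (dist_xy' hjl)
            hwX (hxX l (hyne l hv))
        · exact vis_symm (vis_three (adj_wx l).symm (adj_wx j) (adj_xy j)
            (dist_xy' (Ne.symm hjl)) hwX (hxX j (hyne j hu)))
        · exact vis_two (adj_yz j) (adj_yz l).symm (dist_yy hjl) hzX

lemma muD_eq (hk : 3 ≤ k) : muD (GG k) = 2 := by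
  obtain ⟨X₀, hX₀, hc₀⟩ := dual_construct hk
  have hmem : (2 : ℕ) ∈ {n | ∃ X : Set (VV k), IsDualMVSet (GG k) X ∧ X.ncard = n} :=
    ⟨X₀, hX₀, hc₀⟩
  have hbdd : ∀ n ∈ {n | ∃ X : Set (VV k), IsDualMVSet (GG k) X ∧ X.ncard = n}, n ≤ 2 := by
    rintro n ⟨X, hX, rfl⟩
    exact dual_ncard_le hk hX
  refine le_antisymm (csSup_le ⟨2, hmem⟩ hbdd) (le_csSup ⟨2, ?_⟩ hmem)
  intro n hn
  exact hbdd n hn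

end HkAux

theorem stmt_13 (k : ℕ) (hk : 3 ≤ k) :
    muD ((Hgraph k).deleteEdges
        {s((Sum.inl true : Bool ⊕ Fin k × Bool), Sum.inl false)}) = 2 ∧
    muT ((Hgraph k).deleteEdges
        {s((Sum.inl true : Bool ⊕ Fin k × Bool), Sum.inl false)}) = 0 :=
  ⟨HkAux.muD_eq hk, HkAux.muT_eq hk⟩
end

section
/- Let G be a connected graph and X ⊆ V(G). Then X is a total mutual-visibility set of G if and only if every two vertices u, v ∈ V(G) with d_G(u,v) = 2 are X-visible. -/
open SimpleGraph

private lemma key {V : Type*} (G : SimpleGraph V) (hG : G.Connected) (X : Set V)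
    (h2 : ∀ u v : V, G.dist u v = 2 → IsMVisible G X u v) :
    ∀ n : ℕ, ∀ u v : V, G.dist u v = n → IsMVisible G X u v := by
  classical
  intro n
  induction n using Nat.strong_induction_on with
  | _ n ih =>
  match n, ih with
  | 0, _ =>
    intro u v hd
    have huv : u = v := (hG.dist_eq_zero_iff).mp hd
    subst huv
    exact ⟨SimpleGraph.Walk.nil, by simp [hd], by simp⟩
  | 1, _ =>
    intro u v hd
    have hadj : G.Adj u v := SimpleGraph.dist_eq_one_iff_adj.mp hd
    exact ⟨SimpleGraph.Walk.cons hadj SimpleGraph.Walk.nil, by simp [hd],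
      by intro w hw _; simpa using hw⟩
  | 2, _ =>
    intro u v hd
    exact h2 u v hd
  | (n + 3), ih =>
    intro u v hd
    obtain ⟨P, hP⟩ := hG.exists_walk_length_eq_dist u v
    rw [hd] at hP
    cases P with
    | nil => simp at hP
    | @cons _ x1 _ hux1 Q =>
      simp only [SimpleGraph.Walk.length_cons] at hP
      have hQlen : Q.length = n + 2 := by omega
      have hd1 : G.dist u x1 = 1 := SimpleGraph.dist_eq_one_iff_adj.mpr hux1
      have hx1v : G.dist x1 v = n + 2 := by
        have h1 : G.dist x1 v ≤ n + 2 := hQlen ▸ SimpleGraph.dist_le Q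
        have h2' : G.dist u v ≤ G.dist u x1 + G.dist x1 v := hG.dist_triangle
        omega
      obtain ⟨Q', hQ'len, hQ'X⟩ := ih (n + 2) (by omega) x1 v hx1v
      cases Q' with
      | nil => simp only [SimpleGraph.Walk.length_nil] at hQ'len; omega
      | @cons _ y2 _ hx1y2 R =>
        simp only [SimpleGraph.Walk.length_cons] at hQ'len
        have hRlen : R.length = n + 1 := by omega
        have hy2v : G.dist y2 v ≤ n + 1 := hRlen ▸ SimpleGraph.dist_le R
        have hy2d : G.dist u y2 = 2 := by
          have h1 : G.dist u y2 ≤ G.dist u x1 + G.dist x1 y2 := hG.dist_triangle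
          have h2' : G.dist x1 y2 = 1 := SimpleGraph.dist_eq_one_iff_adj.mpr hx1y2
          have h3 : G.dist u v ≤ G.dist u y2 + G.dist y2 v := hG.dist_triangle
          omega
        obtain ⟨S, hSlen, hSX⟩ := h2 u y2 hy2d
        refine ⟨S.append R, ?_, ?_⟩
        · rw [SimpleGraph.Walk.length_append, hSlen, hy2d, hRlen, hd]; omega
        · intro w hw hwX
          rw [SimpleGraph.Walk.mem_support_append_iff] at hw
          have hy2nx : y2 ∉ X := by
            intro hy2X
            have : y2 = x1 ∨ y2 = v := hQ'X y2 (by simp) hy2X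
            rcases this with h | h
            · exact hx1y2.ne' h
            · rw [h] at hy2d; omega
          rcases hw with hw | hw
          · rcases hSX w hw hwX with h | h
            · exact Or.inl h
            · exact absurd (h ▸ hwX) hy2nx
          · have : w = x1 ∨ w = v := hQ'X w (by simp [hw]) hwX
            rcases this with h | h
            · subst h
              have := SimpleGraph.dist_le (R.dropUntil w hw)
              have := SimpleGraph.Walk.length_dropUntil_le R hw
              omega
            · exact Or.inr h

theorem stmt_14 {V : Type*} (G : SimpleGraph V) (hG : G.Connected) (X : Set V) :
    IsTotalMVSet G X ↔ ∀ u v : V, G.dist u v = 2 → IsMVisible G X u v := by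
  constructor
  · intro h u v _; exact h u v
  · intro h2 u v
    exact key G hG X h2 (G.dist u v) u v rfl
end
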